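/- arXiv:1301.4786 — 8 statements merged into one kernel-verified Lean document; each statement's English description precedes it below -/
import Mathlib

section
/- In the offline two-base-station energy cooperation problem over slots t ∈ {1,…,N} with initial storage state (0,0), the infimum of the total conventional (grid) energy Σ_{t=1}^{N}(w₁(t)+w₂(t)) over all feasible policies is attained; moreover, it is attained by a feasible policy that additionally satisfies the complementarity conditions c₁(t)·d₁(t) = 0, c₂(t)·d₂(t) = 0, and x₁₂(t)·x₂₁(t) = 0 for every t ∈ {1,…,N}, so that omitting these bilinear constraints from the linear program in Theorem 1 incurs no loss of optimality. -/
/-- A feasible policy for the two-base-station energy cooperation problem over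
slots `t ∈ {k, …, N}` from initial storage state `(σ₁, σ₂)`. -/
def Feasible (α β Smax : ℝ) (k N : ℕ) (E₁ E₂ : ℕ → ℝ) (σ₁ σ₂ : ℝ)
    (w₁ w₂ c₁ c₂ d₁ d₂ x₁₂ x₂₁ s₁ s₂ : ℕ → ℝ) : Prop :=
  s₁ k = σ₁ ∧ s₂ k = σ₂ ∧
  (∀ t ∈ Finset.Icc k N,
    0 ≤ w₁ t ∧ 0 ≤ w₂ t ∧ 0 ≤ c₁ t ∧ 0 ≤ c₂ t ∧ 0 ≤ d₁ t ∧ 0 ≤ d₂ t ∧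
      0 ≤ x₁₂ t ∧ 0 ≤ x₂₁ t ∧
      s₁ (t + 1) = s₁ t + α * c₁ t - d₁ t ∧
      s₂ (t + 1) = s₂ t + α * c₂ t - d₂ t ∧
      d₁ t ≤ s₁ t ∧ d₂ t ≤ s₂ t ∧
      0 ≤ E₁ t + w₁ t - c₁ t + α * d₁ t - x₁₂ t + β * x₂₁ t ∧
      0 ≤ E₂ t + w₂ t - c₂ t + α * d₂ t - x₂₁ t + β * x₁₂ t) ∧
  (∀ t ∈ Finset.Icc k (N + 1),
    0 ≤ s₁ t ∧ s₁ t ≤ Smax ∧ 0 ≤ s₂ t ∧ s₂ t ≤ Smax)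

/-- Optimal cost `J*_k(σ₁, σ₂)`: the infimum of total grid draw over feasible policies. -/
noncomputable def Jstar (α β Smax : ℝ) (k N : ℕ) (E₁ E₂ : ℕ → ℝ) (σ₁ σ₂ : ℝ) : ℝ :=
  sInf {r : ℝ | ∃ w₁ w₂ c₁ c₂ d₁ d₂ x₁₂ x₂₁ s₁ s₂ : ℕ → ℝ,
    Feasible α β Smax k N E₁ E₂ σ₁ σ₂ w₁ w₂ c₁ c₂ d₁ d₂ x₁₂ x₂₁ s₁ s₂ ∧
    (∑ t ∈ Finset.Icc k N, (w₁ t + w₂ t)) = r}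

/-!
Simultaneous charging and discharging, and simultaneous transfers in both directions, are round
trips that only lose energy. Charging `δ` at a station and discharging `α δ` of it in the same
slot leaves the storage trajectory unchanged and improves that station's balance by
`(1 - α²) δ ≥ 0`; sending `m` each way between the stations improves both balances by
`(1 - β) m ≥ 0`. Cancelling the largest such round trips makes every feasible policy
complementary without changing its grid draw.

Without two-way transfers every variable of a policy of cost at most `C` is bounded at slot `t`
by `2 (|E₁ t| + |E₂ t| + C + Smax)`. Taking for `C` the cost of a fixed feasible policy, every
feasible policy of cost at most `C` can therefore be replaced, after zeroing it outside the
horizon, by one of the same cost in the compact set of complementary feasible policies lying in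
this box. The continuous cost attains its minimum on that set, and the minimum is `J*`.
-/

open Finset

/-- The part `δ ≤ c` of a charge `c` that can be matched by a discharge `α δ ≤ d`, chosen so
that afterwards `c - δ = 0` or `d - α δ = 0`. -/
noncomputable def roundTrip (α c d : ℝ) : ℝ := if α * c ≤ d then c else d / α

lemma roundTrip_spec {α c d : ℝ} (hα : 0 ≤ α) (hc : 0 ≤ c) (hd : 0 ≤ d) :
    0 ≤ roundTrip α c d ∧ roundTrip α c d ≤ c ∧ α * roundTrip α c d ≤ d ∧
      (c - roundTrip α c d) * (d - α * roundTrip α c d) = 0 := by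
  unfold roundTrip
  split_ifs with h
  · exact ⟨hc, le_rfl, h, by ring⟩
  · have hα₀ : 0 < α := lt_of_le_of_ne hα fun h₀ => h (by simp [← h₀, hd])
    refine ⟨div_nonneg hd hα, (div_le_iff₀ hα₀).2 (by linarith), ?_, ?_⟩ <;>
      simp [mul_div_cancel₀ d hα₀.ne']

lemma sub_min_mul_sub_min {R : Type*} [CommRing R] [LinearOrder R] (x y : R) :
    (x - min x y) * (y - min x y) = 0 := by
  rcases le_total x y with h | h <;> simp [h]

lemma indicator_apply_mem_Icc {ι M : Type*} [Zero M] [Preorder M] {s : Set ι} {f B : ι → M}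
    {t : ι} (hf : t ∈ s → f t ∈ Set.Icc 0 (B t)) (hB : 0 ≤ B t) :
    s.indicator f t ∈ Set.Icc 0 (B t) := by
  by_cases ht : t ∈ s
  · simpa [ht] using hf ht
  · simpa [ht] using hB

def slotBound (Smax C : ℝ) (E₁ E₂ : ℕ → ℝ) (t : ℕ) : ℝ := 2 * (|E₁ t| + |E₂ t| + C + Smax)

/-- Policies `(w₁, w₂, c₁, c₂, d₁, d₂, x₁₂, x₂₁, s₁, s₂)` are packed as `p : Fin 10 → ℕ → ℝ`,
a product of real lines. -/
def IsComplementaryFeasible (α β Smax : ℝ) (k N : ℕ) (E₁ E₂ : ℕ → ℝ) (σ₁ σ₂ : ℝ)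
    (p : Fin 10 → ℕ → ℝ) : Prop :=
  Feasible α β Smax k N E₁ E₂ σ₁ σ₂ (p 0) (p 1) (p 2) (p 3) (p 4) (p 5) (p 6) (p 7) (p 8) (p 9) ∧
    ∀ t ∈ Icc k N, p 2 t * p 4 t = 0 ∧ p 3 t * p 5 t = 0 ∧ p 6 t * p 7 t = 0

lemma isClosed_setOf_isComplementaryFeasible (α β Smax : ℝ) (k N : ℕ) (E₁ E₂ : ℕ → ℝ)
    (σ₁ σ₂ : ℝ) : IsClosed {p | IsComplementaryFeasible α β Smax k N E₁ E₂ σ₁ σ₂ p} := by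
  simp only [IsComplementaryFeasible, Feasible, Set.ofPred_and, Set.ofPred_forall]
  repeat' first
    | apply IsClosed.inter
    | (apply isClosed_iInter; intro)
    | exact isClosed_eq (by fun_prop) (by fun_prop)
    | exact isClosed_le (by fun_prop) (by fun_prop)

theorem feasible_gridOnly {α β Smax : ℝ} {k N : ℕ} (E₁ E₂ : ℕ → ℝ) {σ₁ σ₂ : ℝ}
    (hσ₁ : σ₁ ∈ Set.Icc 0 Smax) (hσ₂ : σ₂ ∈ Set.Icc 0 Smax) :
    Feasible α β Smax k N E₁ E₂ σ₁ σ₂ (fun t => max 0 (-E₁ t)) (fun t => max 0 (-E₂ t))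
      0 0 0 0 0 0 (fun _ => σ₁) (fun _ => σ₂) := by
  refine ⟨rfl, rfl, fun t _ => ?_, fun _ _ => ⟨hσ₁.1, hσ₁.2, hσ₂.1, hσ₂.2⟩⟩
  simp only [Pi.zero_apply, mul_zero, add_zero, sub_zero, le_refl, le_max_left, true_and]
  exact ⟨hσ₁.1, hσ₂.1, by linarith [le_max_right 0 (-E₁ t)], by linarith [le_max_right 0 (-E₂ t)]⟩

namespace Feasible

variable {α β Smax : ℝ} {k N : ℕ} {E₁ E₂ : ℕ → ℝ} {σ₁ σ₂ : ℝ}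
  {w₁ w₂ c₁ c₂ d₁ d₂ x₁₂ x₂₁ s₁ s₂ : ℕ → ℝ}

theorem exists_complementary
    (h : Feasible α β Smax k N E₁ E₂ σ₁ σ₂ w₁ w₂ c₁ c₂ d₁ d₂ x₁₂ x₂₁ s₁ s₂)
    (hα₀ : 0 ≤ α) (hα₁ : α ≤ 1) (hβ₁ : β ≤ 1) :
    ∃ c₁' c₂' d₁' d₂' x₁₂' x₂₁' : ℕ → ℝ,
      Feasible α β Smax k N E₁ E₂ σ₁ σ₂ w₁ w₂ c₁' c₂' d₁' d₂' x₁₂' x₂₁' s₁ s₂ ∧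
      ∀ t ∈ Icc k N, c₁' t * d₁' t = 0 ∧ c₂' t * d₂' t = 0 ∧ x₁₂' t * x₂₁' t = 0 := by
  obtain ⟨hs₁, hs₂, hslot, hstore⟩ := h
  set δ₁ := fun t => roundTrip α (c₁ t) (d₁ t)
  set δ₂ := fun t => roundTrip α (c₂ t) (d₂ t)
  set m := fun t => min (x₁₂ t) (x₂₁ t)
  refine ⟨fun t => c₁ t - δ₁ t, fun t => c₂ t - δ₂ t, fun t => d₁ t - α * δ₁ t,
    fun t => d₂ t - α * δ₂ t, fun t => x₁₂ t - m t, fun t => x₂₁ t - m t,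
    ⟨hs₁, hs₂, fun t ht => ?_, hstore⟩, fun t ht => ?_⟩
  · obtain ⟨hw₁, hw₂, hc₁, hc₂, hd₁, hd₂, hx₁₂, hx₂₁, hs₁', hs₂', hds₁, hds₂, hb₁, hb₂⟩ :=
      hslot t ht
    obtain ⟨hδ₁, hδc₁, hδd₁, -⟩ := roundTrip_spec hα₀ hc₁ hd₁
    obtain ⟨hδ₂, hδc₂, hδd₂, -⟩ := roundTrip_spec hα₀ hc₂ hd₂
    have hloss₁ : 0 ≤ (1 - α * α) * δ₁ t := mul_nonneg (by nlinarith) hδ₁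
    have hloss₂ : 0 ≤ (1 - α * α) * δ₂ t := mul_nonneg (by nlinarith) hδ₂
    have hlossₓ : 0 ≤ (1 - β) * m t := mul_nonneg (by linarith) (le_min hx₁₂ hx₂₁)
    have hm₁ : m t ≤ x₁₂ t := min_le_left _ _
    have hm₂ : m t ≤ x₂₁ t := min_le_right _ _
    have hαδ₁ : 0 ≤ α * δ₁ t := mul_nonneg hα₀ hδ₁
    have hαδ₂ : 0 ≤ α * δ₂ t := mul_nonneg hα₀ hδ₂
    refine ⟨hw₁, hw₂, ?_, ?_, ?_, ?_, ?_, ?_, ?_, ?_, ?_, ?_, ?_, ?_⟩ <;> linarith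
  · obtain ⟨-, -, hc₁, hc₂, hd₁, hd₂, -⟩ := hslot t ht
    exact ⟨(roundTrip_spec hα₀ hc₁ hd₁).2.2.2, (roundTrip_spec hα₀ hc₂ hd₂).2.2.2,
      sub_min_mul_sub_min _ _⟩

theorem indicator (h : Feasible α β Smax k N E₁ E₂ σ₁ σ₂ w₁ w₂ c₁ c₂ d₁ d₂ x₁₂ x₂₁ s₁ s₂)
    (hk : k ≤ N + 1) :
    let I := (Set.Icc k N).indicator
    let J := (Set.Icc k (N + 1)).indicator
    Feasible α β Smax k N E₁ E₂ σ₁ σ₂ (I w₁) (I w₂) (I c₁) (I c₂) (I d₁) (I d₂) (I x₁₂) (I x₂₁)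
      (J s₁) (J s₂) := by
  obtain ⟨hs₁, hs₂, hslot, hstore⟩ := h
  intro I J
  have hkJ : k ∈ Set.Icc k (N + 1) := ⟨le_rfl, hk⟩
  refine ⟨by simp only [J, Set.indicator_of_mem hkJ, hs₁],
    by simp only [J, Set.indicator_of_mem hkJ, hs₂], fun t ht => ?_, fun t ht => ?_⟩
  · obtain ⟨hkt, htN⟩ := mem_Icc.1 ht
    have htI : t ∈ Set.Icc k N := ⟨hkt, htN⟩
    have htJ : t ∈ Set.Icc k (N + 1) := ⟨hkt, by omega⟩
    have ht₁J : t + 1 ∈ Set.Icc k (N + 1) := ⟨by omega, by omega⟩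
    simp only [I, J, Set.indicator_of_mem htI, Set.indicator_of_mem htJ,
      Set.indicator_of_mem ht₁J]
    exact hslot t ht
  · have htJ : t ∈ Set.Icc k (N + 1) := mem_Icc.1 ht
    simp only [J, Set.indicator_of_mem htJ]
    exact hstore t ht

theorem mem_Icc_slotBound
    (h : Feasible α β Smax k N E₁ E₂ σ₁ σ₂ w₁ w₂ c₁ c₂ d₁ d₂ x₁₂ x₂₁ s₁ s₂)
    (hα₁ : α ≤ 1) (hβ₁ : β ≤ 1) {C : ℝ} (hC : ∑ t ∈ Icc k N, (w₁ t + w₂ t) ≤ C)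
    {t : ℕ} (ht : t ∈ Icc k N) (hx : x₁₂ t * x₂₁ t = 0) :
    let I := Set.Icc 0 (slotBound Smax C E₁ E₂ t)
    w₁ t ∈ I ∧ w₂ t ∈ I ∧ c₁ t ∈ I ∧ c₂ t ∈ I ∧ d₁ t ∈ I ∧ d₂ t ∈ I ∧ x₁₂ t ∈ I ∧ x₂₁ t ∈ I := by
  obtain ⟨-, -, hslot, hstore⟩ := h
  obtain ⟨hw₁, hw₂, hc₁, hc₂, hd₁, hd₂, hx₁₂, hx₂₁, -, -, hds₁, hds₂, hb₁, hb₂⟩ := hslot t ht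
  obtain ⟨-, hs₁, -, hs₂⟩ := hstore t (mem_Icc.2 ⟨(mem_Icc.1 ht).1, (mem_Icc.1 ht).2.trans N.le_succ⟩)
  have hw : w₁ t + w₂ t ≤ C :=
    (single_le_sum (fun r hr => add_nonneg (hslot r hr).1 (hslot r hr).2.1) ht).trans hC
  have hE₁ := le_abs_self (E₁ t)
  have hE₂ := le_abs_self (E₂ t)
  have := abs_nonneg (E₁ t)
  have := abs_nonneg (E₂ t)
  have hαd₁ : α * d₁ t ≤ d₁ t := mul_le_of_le_one_left hd₁ hα₁
  have hαd₂ : α * d₂ t ≤ d₂ t := mul_le_of_le_one_left hd₂ hα₁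
  have hβx₁₂ : β * x₁₂ t ≤ x₁₂ t := mul_le_of_le_one_left hx₁₂ hβ₁
  have hβx₂₁ : β * x₂₁ t ≤ x₂₁ t := mul_le_of_le_one_left hx₂₁ hβ₁
  -- with nothing sent back, a transfer is covered by the sender's own supply
  have hx₁₂_le : x₁₂ t ≤ |E₁ t| + |E₂ t| + C + Smax := by
    rcases mul_eq_zero.1 hx with h0 | h0 <;> linarith
  have hx₂₁_le : x₂₁ t ≤ |E₁ t| + |E₂ t| + C + Smax := by
    rcases mul_eq_zero.1 hx with h0 | h0 <;> linarith
  unfold slotBound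
  refine ⟨⟨?_, ?_⟩, ⟨?_, ?_⟩, ⟨?_, ?_⟩, ⟨?_, ?_⟩, ⟨?_, ?_⟩, ⟨?_, ?_⟩, ⟨?_, ?_⟩, ⟨?_, ?_⟩⟩ <;>
    linarith

theorem exists_isComplementaryFeasible_mem_box
    (h : Feasible α β Smax k N E₁ E₂ σ₁ σ₂ w₁ w₂ c₁ c₂ d₁ d₂ x₁₂ x₂₁ s₁ s₂)
    (hα₀ : 0 ≤ α) (hα₁ : α ≤ 1) (hβ₁ : β ≤ 1) (hS : 0 ≤ Smax) (hk : k ≤ N + 1) {C : ℝ}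
    (hC : ∑ t ∈ Icc k N, (w₁ t + w₂ t) ≤ C) :
    ∃ p ∈ Set.univ.pi fun _ => Set.univ.pi fun t => Set.Icc 0 (slotBound Smax C E₁ E₂ t),
      IsComplementaryFeasible α β Smax k N E₁ E₂ σ₁ σ₂ p ∧
        ∑ t ∈ Icc k N, (p 0 t + p 1 t) = ∑ t ∈ Icc k N, (w₁ t + w₂ t) := by
  obtain ⟨c₁', c₂', d₁', d₂', x₁₂', x₂₁', hf, hcomp⟩ := h.exists_complementary hα₀ hα₁ hβ₁
  have hC₀ : 0 ≤ C :=
    (sum_nonneg fun t ht => add_nonneg (h.2.2.1 t ht).1 (h.2.2.1 t ht).2.1).trans hC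
  have hSB t : Smax ≤ slotBound Smax C E₁ E₂ t := by
    unfold slotBound; linarith [abs_nonneg (E₁ t), abs_nonneg (E₂ t)]
  have hctrl t (ht : t ∈ Set.Icc k N) :=
    hf.mem_Icc_slotBound hα₁ hβ₁ hC (mem_Icc.2 ht) (hcomp t (mem_Icc.2 ht)).2.2
  have hsto t (ht : t ∈ Set.Icc k (N + 1)) := hf.2.2.2 t (mem_Icc.2 ht)
  set I : (ℕ → ℝ) → ℕ → ℝ := (Set.Icc k N).indicator
  have hI (f : ℕ → ℝ) t (ht : t ∈ Icc k N) : I f t = f t :=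
    Set.indicator_of_mem (s := Set.Icc k N) (mem_Icc.1 ht) f
  refine ⟨![I w₁, I w₂, I c₁', I c₂', I d₁', I d₂', I x₁₂', I x₂₁',
    (Set.Icc k (N + 1)).indicator s₁, (Set.Icc k (N + 1)).indicator s₂], ?_,
    ⟨hf.indicator hk, fun t ht => ?_⟩, sum_congr rfl fun t ht => ?_⟩
  · simp only [Set.mem_univ_pi]
    intro i t
    fin_cases i <;> refine indicator_apply_mem_Icc (fun ht => ?_) (hS.trans (hSB t))
    all_goals first
      | have := hctrl t ht; simp only at this ⊢; tauto
      | have := hsto t ht; exact ⟨by tauto, by linarith [hSB t]⟩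
  · simp only [Matrix.cons_val, hI _ t ht]
    exact hcomp t ht
  · simp only [Matrix.cons_val, hI _ t ht]

theorem exists_isComplementaryFeasible_cost_eq_Jstar
    (h : Feasible α β Smax k N E₁ E₂ σ₁ σ₂ w₁ w₂ c₁ c₂ d₁ d₂ x₁₂ x₂₁ s₁ s₂)
    (hα₀ : 0 ≤ α) (hα₁ : α ≤ 1) (hβ₁ : β ≤ 1) (hS : 0 ≤ Smax) (hk : k ≤ N + 1) :
    ∃ p, IsComplementaryFeasible α β Smax k N E₁ E₂ σ₁ σ₂ p ∧
      ∑ t ∈ Icc k N, (p 0 t + p 1 t) = Jstar α β Smax k N E₁ E₂ σ₁ σ₂ := by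
  set C := ∑ t ∈ Icc k N, (w₁ t + w₂ t)
  set K := (Set.univ.pi fun _ : Fin 10 => Set.univ.pi fun t =>
      Set.Icc 0 (slotBound Smax C E₁ E₂ t)) ∩
    {p | IsComplementaryFeasible α β Smax k N E₁ E₂ σ₁ σ₂ p}
  have hK : IsCompact K :=
    (isCompact_univ_pi fun _ => isCompact_univ_pi fun _ => isCompact_Icc).inter_right
      (isClosed_setOf_isComplementaryFeasible α β Smax k N E₁ E₂ σ₁ σ₂)
  have hcost : Continuous fun p : Fin 10 → ℕ → ℝ => ∑ t ∈ Icc k N, (p 0 t + p 1 t) :=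
    continuous_finsetSum _ fun t _ => by fun_prop
  obtain ⟨p₀, hp₀, hp₀K, hp₀C⟩ :=
    h.exists_isComplementaryFeasible_mem_box hα₀ hα₁ hβ₁ hS hk le_rfl
  obtain ⟨q, ⟨-, hq⟩, hqmin⟩ := hK.exists_isMinOn ⟨p₀, hp₀, hp₀K⟩ hcost.continuousOn
  refine ⟨q, hq, Eq.symm <| IsLeast.csInf_eq ⟨⟨_, _, _, _, _, _, _, _, _, _, hq.1, rfl⟩, ?_⟩⟩
  rintro _ ⟨w₁', w₂', c₁', c₂', d₁', d₂', x₁₂', x₂₁', s₁', s₂', hf, rfl⟩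
  rcases le_total (∑ t ∈ Icc k N, (w₁' t + w₂' t)) C with hle | hle
  · obtain ⟨p, hp, hpK, hpC⟩ := hf.exists_isComplementaryFeasible_mem_box hα₀ hα₁ hβ₁ hS hk hle
    exact hpC ▸ hqmin ⟨hp, hpK⟩
  · exact (hqmin ⟨hp₀, hp₀K⟩).trans (hp₀C.trans_le hle)

end Feasible

theorem offline_LP_attained_with_complementarity_general
    (α β Smax : ℝ) (hα : 0 ≤ α ∧ α ≤ 1) (hβ : 0 ≤ β ∧ β ≤ 1) (hS : 0 < Smax)
    (N : ℕ) (E₁ E₂ : ℕ → ℝ) :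
    ∃ w₁ w₂ c₁ c₂ d₁ d₂ x₁₂ x₂₁ s₁ s₂ : ℕ → ℝ,
      Feasible α β Smax 1 N E₁ E₂ 0 0 w₁ w₂ c₁ c₂ d₁ d₂ x₁₂ x₂₁ s₁ s₂ ∧
      (∑ t ∈ Finset.Icc 1 N, (w₁ t + w₂ t)) = Jstar α β Smax 1 N E₁ E₂ 0 0 ∧
      ∀ t ∈ Finset.Icc 1 N,
        c₁ t * d₁ t = 0 ∧ c₂ t * d₂ t = 0 ∧ x₁₂ t * x₂₁ t = 0 := by
  have hσ : (0 : ℝ) ∈ Set.Icc 0 Smax := ⟨le_rfl, hS.le⟩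
  obtain ⟨p, ⟨hfeas, hcomp⟩, hcost⟩ :=
    (feasible_gridOnly E₁ E₂ hσ hσ).exists_isComplementaryFeasible_cost_eq_Jstar
      hα.1 hα.2 hβ.2 hS.le (Nat.le_add_left 1 N)
  exact ⟨p 0, p 1, p 2, p 3, p 4, p 5, p 6, p 7, p 8, p 9, hfeas, hcost, hcomp⟩

/-- the infimum of total grid energy in the offline two-BS problem over
slots `{1, …, N}` from initial state `(0, 0)` is attained, and attained by a feasible
policy satisfying the complementarity conditions `c₁·d₁ = 0`, `c₂·d₂ = 0`,
`x₁₂·x₂₁ = 0` at every slot. -/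
theorem offline_LP_attained_with_complementarity
    (α β Smax : ℝ) (hα : 0 ≤ α ∧ α ≤ 1) (hβ : 0 ≤ β ∧ β ≤ 1) (hS : 0 < Smax)
    (N : ℕ) (hN : 1 ≤ N) (E₁ E₂ : ℕ → ℝ) :
    ∃ w₁ w₂ c₁ c₂ d₁ d₂ x₁₂ x₂₁ s₁ s₂ : ℕ → ℝ,
      Feasible α β Smax 1 N E₁ E₂ 0 0 w₁ w₂ c₁ c₂ d₁ d₂ x₁₂ x₂₁ s₁ s₂ ∧
      (∑ t ∈ Finset.Icc 1 N, (w₁ t + w₂ t)) = Jstar α β Smax 1 N E₁ E₂ 0 0 ∧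
      ∀ t ∈ Finset.Icc 1 N,
        c₁ t * d₁ t = 0 ∧ c₂ t * d₂ t = 0 ∧ x₁₂ t * x₂₁ t = 0 :=
  offline_LP_attained_with_complementarity_general α β Smax hα hβ hS N E₁ E₂
end

section
/- Let 0 < α ≤ 1 and 0 < β ≤ 1, fix a state (s₁,s₂) ∈ [0,S_max]² and net energies (E₁,E₂) ∈ ℝ². Let V₁ be the infimum of grid draw w₁+w₂ over one-step feasible actions, and let M be the supremum of the next-state storage sum (s₁+α·c₁−d₁)+(s₂+α·c₂−d₂) over one-step feasible actions with grid draw at most V₁. Then for any γ with 0 < γ < α·β, every one-step feasible action that minimizes (w₁+w₂) − γ·((s₁+α·c₁−d₁)+(s₂+α·c₂−d₂)) over all one-step feasible actions has grid draw exactly V₁ and next-state storage sum exactly M. -/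
/-- A one-step feasible action at state `(s₁, s₂)` with net energies `(E₁, E₂)`. -/
def OneStep (α β Smax s₁ s₂ E₁ E₂ w₁ w₂ c₁ c₂ d₁ d₂ x₁₂ x₂₁ : ℝ) : Prop :=
  0 ≤ w₁ ∧ 0 ≤ w₂ ∧ 0 ≤ c₁ ∧ 0 ≤ c₂ ∧ 0 ≤ d₁ ∧ 0 ≤ d₂ ∧ 0 ≤ x₁₂ ∧ 0 ≤ x₂₁ ∧
  d₁ ≤ s₁ ∧ d₂ ≤ s₂ ∧
  0 ≤ s₁ + α * c₁ - d₁ ∧ s₁ + α * c₁ - d₁ ≤ Smax ∧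
  0 ≤ s₂ + α * c₂ - d₂ ∧ s₂ + α * c₂ - d₂ ≤ Smax ∧
  0 ≤ E₁ + w₁ - c₁ + α * d₁ - x₁₂ + β * x₂₁ ∧
  0 ≤ E₂ + w₂ - c₂ + α * d₂ - x₂₁ + β * x₁₂

/-- One-step minimal grid draw `V₁(s₁, s₂, E₁, E₂)`. -/
noncomputable def V1 (α β Smax s₁ s₂ E₁ E₂ : ℝ) : ℝ :=
  sInf {r : ℝ | ∃ w₁ w₂ c₁ c₂ d₁ d₂ x₁₂ x₂₁ : ℝ,
    OneStep α β Smax s₁ s₂ E₁ E₂ w₁ w₂ c₁ c₂ d₁ d₂ x₁₂ x₂₁ ∧ w₁ + w₂ = r}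

/-! For a target next state `τ`, the least draw `minDraw` is `gridDraw` of the bus energies
`E + storageGain α (s - τ)`, and `V₁` is attained by emptying both stores. Lowering the target
by `δ` raises the bus energies by at least `α * δ`, hence lowers the draw by at least
`α * β * δ` until it reaches `V₁`. So an action with draw `V₁ + ε` can give up storage
`ε / (α * β)` and come back to draw `V₁`; as `γ < α * β`, the scalarized objective gains from
this trade, so its minimizers have draw `V₁`, and among the actions of draw `V₁` they maximize
the storage, i.e. reach `M`. -/

/-- Net energy released to a bus when its storage level drops by `u` (a rise costs `-u / α`). -/
noncomputable def storageGain (α u : ℝ) : ℝ := min (α * u) (u / α)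

/-- Least grid draw of two buses with net energies `e₁, e₂`, linked with transfer efficiency `β`. -/
noncomputable def gridDraw (β e₁ e₂ : ℝ) : ℝ :=
  max 0 (max (-e₁ - β * e₂) (max (-e₂ - β * e₁) (-e₁ - e₂)))

noncomputable def minDraw (α β s₁ s₂ E₁ E₂ τ₁ τ₂ : ℝ) : ℝ :=
  gridDraw β (E₁ + storageGain α (s₁ - τ₁)) (E₂ + storageGain α (s₂ - τ₂))

section StorageGain

variable {α : ℝ}

theorem storageGain_add_le (hα₀ : 0 < α) (hα₁ : α ≤ 1) {u u' : ℝ} (h : u ≤ u') :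
    storageGain α u + α * (u' - u) ≤ storageGain α u' := by
  have hαα : α * α ≤ 1 := by nlinarith
  unfold storageGain
  refine le_min ?_ ?_
  · linarith [min_le_left (α * u) (u / α)]
  · have : α * (u' - u) ≤ (u' - u) / α := by
      rw [le_div_iff₀ hα₀]; nlinarith [mul_nonneg (sub_nonneg.2 h) (sub_nonneg.2 hαα)]
    have hsplit : u' / α = u / α + (u' - u) / α := by ring
    linarith [min_le_right (α * u) (u / α)]

theorem le_storageGain (hα₀ : 0 < α) (hα₁ : α ≤ 1) {c d : ℝ} (hc : 0 ≤ c) (hd : 0 ≤ d) :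
    α * d - c ≤ storageGain α (d - α * c) := by
  have hαα : α * α ≤ 1 := by nlinarith
  refine le_min ?_ ?_
  · nlinarith [mul_nonneg hc (sub_nonneg.2 hαα)]
  · rw [le_div_iff₀ hα₀]; nlinarith [mul_nonneg hd (sub_nonneg.2 hαα)]

theorem exists_charge_discharge (hα₀ : 0 < α) {s τ : ℝ} (hs : 0 ≤ s) (hτ : 0 ≤ τ) :
    ∃ c d : ℝ, 0 ≤ c ∧ 0 ≤ d ∧ d ≤ s ∧ s + α * c - d = τ ∧
      storageGain α (s - τ) ≤ α * d - c := by
  rcases le_total τ s with h | h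
  · exact ⟨0, s - τ, le_rfl, by linarith, by linarith, by ring,
      by simp only [storageGain, sub_zero]; exact min_le_left _ _⟩
  · refine ⟨(τ - s) / α, 0, div_nonneg (by linarith) hα₀.le, le_rfl, hs, ?_, ?_⟩
    · field_simp; ring
    · have : (s - τ) / α = α * 0 - (τ - s) / α := by ring
      exact this ▸ min_le_right _ _

end StorageGain

section GridDraw

variable {β e₁ e₂ : ℝ}

theorem gridDraw_le_iff {r : ℝ} :
    gridDraw β e₁ e₂ ≤ r ↔ 0 ≤ r ∧ -e₁ - β * e₂ ≤ r ∧ -e₂ - β * e₁ ≤ r ∧ -e₁ - e₂ ≤ r := by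
  simp only [gridDraw, max_le_iff]

theorem gridDraw_le_of_balance (hβ₀ : 0 ≤ β) (hβ₁ : β ≤ 1) {w₁ w₂ x₁₂ x₂₁ : ℝ}
    (hw₁ : 0 ≤ w₁) (hw₂ : 0 ≤ w₂) (hx₁₂ : 0 ≤ x₁₂) (hx₂₁ : 0 ≤ x₂₁)
    (h₁ : 0 ≤ e₁ + w₁ - x₁₂ + β * x₂₁) (h₂ : 0 ≤ e₂ + w₂ - x₂₁ + β * x₁₂) :
    gridDraw β e₁ e₂ ≤ w₁ + w₂ := by
  have hββ : β * β ≤ 1 := by nlinarith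
  refine gridDraw_le_iff.2 ⟨by linarith, ?_, ?_, ?_⟩
  · nlinarith [mul_nonneg (sub_nonneg.2 hβ₁) hw₂, mul_nonneg (sub_nonneg.2 hββ) hx₁₂]
  · nlinarith [mul_nonneg (sub_nonneg.2 hβ₁) hw₁, mul_nonneg (sub_nonneg.2 hββ) hx₂₁]
  · nlinarith [mul_nonneg (sub_nonneg.2 hβ₁) hx₁₂, mul_nonneg (sub_nonneg.2 hβ₁) hx₂₁]

/-- Each bus ships its whole surplus to the other and buys its remaining deficit. -/
theorem exists_balance_le_gridDraw (hβ₀ : 0 ≤ β) :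
    ∃ w₁ w₂ x₁₂ x₂₁ : ℝ, 0 ≤ w₁ ∧ 0 ≤ w₂ ∧ 0 ≤ x₁₂ ∧ 0 ≤ x₂₁ ∧
      0 ≤ e₁ + w₁ - x₁₂ + β * x₂₁ ∧ 0 ≤ e₂ + w₂ - x₂₁ + β * x₁₂ ∧
      w₁ + w₂ ≤ gridDraw β e₁ e₂ := by
  refine ⟨max 0 (max 0 e₁ - e₁ - β * max 0 e₂), max 0 (max 0 e₂ - e₂ - β * max 0 e₁),
    max 0 e₁, max 0 e₂, le_max_left _ _, le_max_left _ _, le_max_left _ _, le_max_left _ _,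
    by linarith [le_max_right 0 (max 0 e₁ - e₁ - β * max 0 e₂)],
    by linarith [le_max_right 0 (max 0 e₂ - e₂ - β * max 0 e₁)], ?_⟩
  obtain ⟨h₀, h₁, h₂, h₃⟩ := gridDraw_le_iff.1 (le_refl (gridDraw β e₁ e₂))
  rcases le_total 0 e₁ with he₁ | he₁ <;> rcases le_total 0 e₂ with he₂ | he₂ <;>
    simp only [max_eq_left, max_eq_right, he₁, he₂] <;>
    rw [max_def, max_def] <;> split_ifs <;>
    nlinarith

theorem gridDraw_le_max_sub (hβ₀ : 0 ≤ β) (hβ₁ : β ≤ 1) {f₁ f₂ a₁ a₂ : ℝ}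
    (ha₁ : 0 ≤ a₁) (ha₂ : 0 ≤ a₂) (h₁ : e₁ + a₁ ≤ f₁) (h₂ : e₂ + a₂ ≤ f₂) :
    gridDraw β f₁ f₂ ≤ max 0 (gridDraw β e₁ e₂ - β * (a₁ + a₂)) := by
  obtain ⟨-, g₁, g₂, g₃⟩ := gridDraw_le_iff.1 (le_refl (gridDraw β e₁ e₂))
  refine gridDraw_le_iff.2 ⟨le_max_left _ _, ?_, ?_, ?_⟩ <;> refine le_max_of_le_right ?_
  · nlinarith [mul_le_mul_of_nonneg_left h₂ hβ₀, mul_nonneg (sub_nonneg.2 hβ₁) ha₁]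
  · nlinarith [mul_le_mul_of_nonneg_left h₁ hβ₀, mul_nonneg (sub_nonneg.2 hβ₁) ha₂]
  · nlinarith [mul_nonneg (sub_nonneg.2 hβ₁) ha₁, mul_nonneg (sub_nonneg.2 hβ₁) ha₂]

end GridDraw

section OneStep

variable {α β Smax s₁ s₂ E₁ E₂ : ℝ}

theorem minDraw_nonneg {τ₁ τ₂ : ℝ} : 0 ≤ minDraw α β s₁ s₂ E₁ E₂ τ₁ τ₂ :=
  (gridDraw_le_iff.1 le_rfl).1

theorem minDraw_le_of_oneStep (hα₀ : 0 < α) (hα₁ : α ≤ 1) (hβ₀ : 0 ≤ β) (hβ₁ : β ≤ 1)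
    {w₁ w₂ c₁ c₂ d₁ d₂ x₁₂ x₂₁ : ℝ}
    (h : OneStep α β Smax s₁ s₂ E₁ E₂ w₁ w₂ c₁ c₂ d₁ d₂ x₁₂ x₂₁) :
    minDraw α β s₁ s₂ E₁ E₂ (s₁ + α * c₁ - d₁) (s₂ + α * c₂ - d₂) ≤ w₁ + w₂ := by
  obtain ⟨hw₁, hw₂, hc₁, hc₂, hd₁, hd₂, hx₁₂, hx₂₁, -, -, -, -, -, -, hb₁, hb₂⟩ := h
  have hg₁ := le_storageGain hα₀ hα₁ hc₁ hd₁
  have hg₂ := le_storageGain hα₀ hα₁ hc₂ hd₂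
  rw [show d₁ - α * c₁ = s₁ - (s₁ + α * c₁ - d₁) by ring] at hg₁
  rw [show d₂ - α * c₂ = s₂ - (s₂ + α * c₂ - d₂) by ring] at hg₂
  exact gridDraw_le_of_balance hβ₀ hβ₁ hw₁ hw₂ hx₁₂ hx₂₁ (by linarith) (by linarith)

theorem minDraw_le_max_sub (hα₀ : 0 < α) (hα₁ : α ≤ 1) (hβ₀ : 0 ≤ β) (hβ₁ : β ≤ 1)
    {τ₁ τ₂ τ₁' τ₂' : ℝ} (h₁ : τ₁' ≤ τ₁) (h₂ : τ₂' ≤ τ₂) :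
    minDraw α β s₁ s₂ E₁ E₂ τ₁' τ₂' ≤
      max 0 (minDraw α β s₁ s₂ E₁ E₂ τ₁ τ₂ - α * β * ((τ₁ - τ₁') + (τ₂ - τ₂'))) := by
  have hg₁ := storageGain_add_le hα₀ hα₁ (sub_le_sub_left h₁ s₁)
  have hg₂ := storageGain_add_le hα₀ hα₁ (sub_le_sub_left h₂ s₂)
  calc minDraw α β s₁ s₂ E₁ E₂ τ₁' τ₂'
      ≤ max 0 (minDraw α β s₁ s₂ E₁ E₂ τ₁ τ₂ - β * (α * (τ₁ - τ₁') + α * (τ₂ - τ₂'))) :=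
        gridDraw_le_max_sub hβ₀ hβ₁ (by nlinarith) (by nlinarith) (by linarith) (by linarith)
    _ = _ := by ring_nf

theorem minDraw_zero_le (hα₀ : 0 < α) (hα₁ : α ≤ 1) (hβ₀ : 0 ≤ β) (hβ₁ : β ≤ 1)
    {τ₁ τ₂ : ℝ} (h₁ : 0 ≤ τ₁) (h₂ : 0 ≤ τ₂) :
    minDraw α β s₁ s₂ E₁ E₂ 0 0 ≤ minDraw α β s₁ s₂ E₁ E₂ τ₁ τ₂ := by
  refine (minDraw_le_max_sub hα₀ hα₁ hβ₀ hβ₁ h₁ h₂).trans (max_le minDraw_nonneg ?_)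
  have : 0 ≤ α * β * ((τ₁ - 0) + (τ₂ - 0)) := by positivity
  linarith

theorem minDraw_zero_le_of_oneStep (hα₀ : 0 < α) (hα₁ : α ≤ 1) (hβ₀ : 0 ≤ β) (hβ₁ : β ≤ 1)
    {w₁ w₂ c₁ c₂ d₁ d₂ x₁₂ x₂₁ : ℝ}
    (h : OneStep α β Smax s₁ s₂ E₁ E₂ w₁ w₂ c₁ c₂ d₁ d₂ x₁₂ x₂₁) :
    minDraw α β s₁ s₂ E₁ E₂ 0 0 ≤ w₁ + w₂ := by
  have hdraw := minDraw_le_of_oneStep hα₀ hα₁ hβ₀ hβ₁ h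
  obtain ⟨-, -, -, -, -, -, -, -, -, -, hτ₁, -, hτ₂, -, -, -⟩ := h
  exact (minDraw_zero_le hα₀ hα₁ hβ₀ hβ₁ hτ₁ hτ₂).trans hdraw

theorem exists_oneStep_draw_le_minDraw (hα₀ : 0 < α) (hβ₀ : 0 ≤ β) (hs₁ : 0 ≤ s₁)
    (hs₂ : 0 ≤ s₂) {τ₁ τ₂ : ℝ} (hτ₁ : 0 ≤ τ₁) (hτ₁' : τ₁ ≤ Smax) (hτ₂ : 0 ≤ τ₂)
    (hτ₂' : τ₂ ≤ Smax) :
    ∃ w₁ w₂ c₁ c₂ d₁ d₂ x₁₂ x₂₁ : ℝ, OneStep α β Smax s₁ s₂ E₁ E₂ w₁ w₂ c₁ c₂ d₁ d₂ x₁₂ x₂₁ ∧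
      w₁ + w₂ ≤ minDraw α β s₁ s₂ E₁ E₂ τ₁ τ₂ ∧
      s₁ + α * c₁ - d₁ = τ₁ ∧ s₂ + α * c₂ - d₂ = τ₂ := by
  obtain ⟨c₁, d₁, hc₁, hd₁, hds₁, ht₁, hg₁⟩ := exists_charge_discharge hα₀ hs₁ hτ₁
  obtain ⟨c₂, d₂, hc₂, hd₂, hds₂, ht₂, hg₂⟩ := exists_charge_discharge hα₀ hs₂ hτ₂
  obtain ⟨w₁, w₂, x₁₂, x₂₁, hw₁, hw₂, hx₁₂, hx₂₁, hb₁, hb₂, hw⟩ :=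
    exists_balance_le_gridDraw (e₁ := E₁ + storageGain α (s₁ - τ₁))
      (e₂ := E₂ + storageGain α (s₂ - τ₂)) hβ₀
  exact ⟨w₁, w₂, c₁, c₂, d₁, d₂, x₁₂, x₂₁,
    ⟨hw₁, hw₂, hc₁, hc₂, hd₁, hd₂, hx₁₂, hx₂₁, hds₁, hds₂, ht₁ ▸ hτ₁, ht₁ ▸ hτ₁',
      ht₂ ▸ hτ₂, ht₂ ▸ hτ₂', by linarith, by linarith⟩, hw, ht₁, ht₂⟩

theorem V1_eq_minDraw (hα₀ : 0 < α) (hα₁ : α ≤ 1) (hβ₀ : 0 ≤ β) (hβ₁ : β ≤ 1)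
    (hs₁ : 0 ≤ s₁) (hs₂ : 0 ≤ s₂) (hSmax : 0 ≤ Smax) :
    V1 α β Smax s₁ s₂ E₁ E₂ = minDraw α β s₁ s₂ E₁ E₂ 0 0 := by
  obtain ⟨w₁, w₂, c₁, c₂, d₁, d₂, x₁₂, x₂₁, h, hw, -, -⟩ :=
    exists_oneStep_draw_le_minDraw (E₁ := E₁) (E₂ := E₂) hα₀ hβ₀ hs₁ hs₂ le_rfl hSmax le_rfl hSmax
  have hmem : w₁ + w₂ ∈ {r : ℝ | ∃ w₁ w₂ c₁ c₂ d₁ d₂ x₁₂ x₂₁ : ℝ,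
      OneStep α β Smax s₁ s₂ E₁ E₂ w₁ w₂ c₁ c₂ d₁ d₂ x₁₂ x₂₁ ∧ w₁ + w₂ = r} :=
    ⟨w₁, w₂, c₁, c₂, d₁, d₂, x₁₂, x₂₁, h, rfl⟩
  have hlb : minDraw α β s₁ s₂ E₁ E₂ 0 0 ∈ lowerBounds {r : ℝ | ∃ w₁ w₂ c₁ c₂ d₁ d₂ x₁₂ x₂₁ : ℝ,
      OneStep α β Smax s₁ s₂ E₁ E₂ w₁ w₂ c₁ c₂ d₁ d₂ x₁₂ x₂₁ ∧ w₁ + w₂ = r} := by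
    rintro r ⟨w₁, w₂, c₁, c₂, d₁, d₂, x₁₂, x₂₁, h, rfl⟩
    exact minDraw_zero_le_of_oneStep hα₀ hα₁ hβ₀ hβ₁ h
  exact le_antisymm ((csInf_le ⟨_, hlb⟩ hmem).trans hw) (le_csInf ⟨_, hmem⟩ hlb)

/-- Storage can be traded for grid draw at rate `α * β`: lowering the next state by a total of
`(draw - V₁) / (α * β)` brings the draw down to `V₁`. -/
theorem exists_oneStep_draw_le_minDraw_zero (hα₀ : 0 < α) (hα₁ : α ≤ 1) (hβ₀ : 0 < β)
    (hβ₁ : β ≤ 1) (hs₁ : 0 ≤ s₁) (hs₂ : 0 ≤ s₂) {w₁ w₂ c₁ c₂ d₁ d₂ x₁₂ x₂₁ : ℝ}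
    (h : OneStep α β Smax s₁ s₂ E₁ E₂ w₁ w₂ c₁ c₂ d₁ d₂ x₁₂ x₂₁) :
    ∃ w₁' w₂' c₁' c₂' d₁' d₂' x₁₂' x₂₁' : ℝ,
      OneStep α β Smax s₁ s₂ E₁ E₂ w₁' w₂' c₁' c₂' d₁' d₂' x₁₂' x₂₁' ∧
      w₁' + w₂' ≤ minDraw α β s₁ s₂ E₁ E₂ 0 0 ∧
      α * β * ((s₁ + α * c₁ - d₁) + (s₂ + α * c₂ - d₂) -
          ((s₁ + α * c₁' - d₁') + (s₂ + α * c₂' - d₂'))) ≤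
        w₁ + w₂ - minDraw α β s₁ s₂ E₁ E₂ 0 0 := by
  have hdraw := minDraw_le_of_oneStep hα₀ hα₁ hβ₀.le hβ₁ h
  obtain ⟨-, -, -, -, -, -, -, -, -, -, hτ₁, hτ₁', hτ₂, hτ₂', -, -⟩ := h
  set τ₁ := s₁ + α * c₁ - d₁
  set τ₂ := s₂ + α * c₂ - d₂
  set v := minDraw α β s₁ s₂ E₁ E₂ 0 0
  have hαβ : 0 < α * β := mul_pos hα₀ hβ₀
  set D := (minDraw α β s₁ s₂ E₁ E₂ τ₁ τ₂ - v) / (α * β) with hD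
  have hD₀ : 0 ≤ D :=
    div_nonneg (sub_nonneg.2 (minDraw_zero_le hα₀ hα₁ hβ₀.le hβ₁ hτ₁ hτ₂)) hαβ.le
  have hαβD : α * β * D = minDraw α β s₁ s₂ E₁ E₂ τ₁ τ₂ - v := by
    rw [hD]; field_simp
  rcases le_total (τ₁ + τ₂) D with hle | hlt
  · obtain ⟨w₁', w₂', c₁', c₂', d₁', d₂', x₁₂', x₂₁', h', hw', ht₁, ht₂⟩ :=
      exists_oneStep_draw_le_minDraw (E₁ := E₁) (E₂ := E₂) hα₀ hβ₀.le hs₁ hs₂ le_rfl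
        (hτ₁.trans hτ₁') le_rfl (hτ₂.trans hτ₂')
    refine ⟨w₁', w₂', c₁', c₂', d₁', d₂', x₁₂', x₂₁', h', hw', ?_⟩
    rw [ht₁, ht₂]
    nlinarith
  · set u := τ₁ + τ₂ - D
    have hτ₁u : u - τ₂ ≤ min u τ₁ := le_min (by linarith) (by linarith)
    obtain ⟨w₁', w₂', c₁', c₂', d₁', d₂', x₁₂', x₂₁', h', hw', ht₁, ht₂⟩ :=
      exists_oneStep_draw_le_minDraw (E₁ := E₁) (E₂ := E₂) (τ₁ := min u τ₁)
        (τ₂ := u - min u τ₁) hα₀ hβ₀.le hs₁ hs₂ (le_min (by linarith) hτ₁)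
        ((min_le_right _ _).trans hτ₁') (by linarith [min_le_left u τ₁])
        (by linarith)
    have hdrop : τ₁ - min u τ₁ + (τ₂ - (u - min u τ₁)) = D := by ring
    refine ⟨w₁', w₂', c₁', c₂', d₁', d₂', x₁₂', x₂₁', h', hw'.trans ?_, ?_⟩
    · calc minDraw α β s₁ s₂ E₁ E₂ (min u τ₁) (u - min u τ₁)
          ≤ max 0 (minDraw α β s₁ s₂ E₁ E₂ τ₁ τ₂ - α * β * D) := hdrop ▸
            minDraw_le_max_sub hα₀ hα₁ hβ₀.le hβ₁ (min_le_right _ _) (by linarith)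
        _ = v := by rw [hαβD, sub_sub_cancel, max_eq_right minDraw_nonneg]
    · rw [ht₁, ht₂, show τ₁ + τ₂ - (min u τ₁ + (u - min u τ₁)) = D by ring, hαβD]
      linarith

end OneStep

theorem greedy_combined_LP_general
    (α β Smax : ℝ) (hα : 0 < α ∧ α ≤ 1) (hβ : 0 < β ∧ β ≤ 1)
    (s₁ s₂ : ℝ) (hs₁ : 0 ≤ s₁ ∧ s₁ ≤ Smax) (hs₂ : 0 ≤ s₂ ∧ s₂ ≤ Smax)
    (E₁ E₂ : ℝ) (γ : ℝ) (hγ : 0 < γ ∧ γ < α * β)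
    (M : ℝ)
    (hM : M = sSup {r : ℝ | ∃ w₁ w₂ c₁ c₂ d₁ d₂ x₁₂ x₂₁ : ℝ,
      OneStep α β Smax s₁ s₂ E₁ E₂ w₁ w₂ c₁ c₂ d₁ d₂ x₁₂ x₂₁ ∧
      w₁ + w₂ ≤ V1 α β Smax s₁ s₂ E₁ E₂ ∧
      (s₁ + α * c₁ - d₁) + (s₂ + α * c₂ - d₂) = r})
    (w₁ w₂ c₁ c₂ d₁ d₂ x₁₂ x₂₁ : ℝ)
    (hfeas : OneStep α β Smax s₁ s₂ E₁ E₂ w₁ w₂ c₁ c₂ d₁ d₂ x₁₂ x₂₁)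
    (hmin : ∀ w₁' w₂' c₁' c₂' d₁' d₂' x₁₂' x₂₁' : ℝ,
      OneStep α β Smax s₁ s₂ E₁ E₂ w₁' w₂' c₁' c₂' d₁' d₂' x₁₂' x₂₁' →
      (w₁ + w₂) - γ * ((s₁ + α * c₁ - d₁) + (s₂ + α * c₂ - d₂)) ≤
        (w₁' + w₂') - γ * ((s₁ + α * c₁' - d₁') + (s₂ + α * c₂' - d₂'))) :
    w₁ + w₂ = V1 α β Smax s₁ s₂ E₁ E₂ ∧
      (s₁ + α * c₁ - d₁) + (s₂ + α * c₂ - d₂) = M := by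
  obtain ⟨hα₀, hα₁⟩ := hα
  obtain ⟨hβ₀, hβ₁⟩ := hβ
  obtain ⟨hγ₀, hγ⟩ := hγ
  have hV := V1_eq_minDraw (E₁ := E₁) (E₂ := E₂) hα₀ hα₁ hβ₀.le hβ₁ hs₁.1 hs₂.1
    (hs₁.1.trans hs₁.2)
  have hdraw : w₁ + w₂ = V1 α β Smax s₁ s₂ E₁ E₂ := by
    obtain ⟨w₁', w₂', c₁', c₂', d₁', d₂', x₁₂', x₂₁', h', hw', htrade⟩ :=
      exists_oneStep_draw_le_minDraw_zero hα₀ hα₁ hβ₀ hβ₁ hs₁.1 hs₂.1 hfeas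
    have hopt := hmin _ _ _ _ _ _ _ _ h'
    have hv := minDraw_zero_le_of_oneStep hα₀ hα₁ hβ₀.le hβ₁ hfeas
    set Δ := (s₁ + α * c₁ - d₁) + (s₂ + α * c₂ - d₂) -
      ((s₁ + α * c₁' - d₁') + (s₂ + α * c₂' - d₂'))
    have hΔ : (α * β - γ) * Δ ≤ 0 := by linear_combination hopt + htrade + hw'
    have hΔ₀ : Δ ≤ 0 := nonpos_of_mul_nonpos_right hΔ (by linarith)
    rw [hV]
    exact le_antisymm (by linarith [mul_nonpos_of_nonneg_of_nonpos hγ₀.le hΔ₀]) hv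
  refine ⟨hdraw, hM ▸ (IsGreatest.csSup_eq ⟨?_, ?_⟩).symm⟩
  · exact ⟨w₁, w₂, c₁, c₂, d₁, d₂, x₁₂, x₂₁, hfeas, hdraw.le, rfl⟩
  · rintro r ⟨w₁', w₂', c₁', c₂', d₁', d₂', x₁₂', x₂₁', h', hw', rfl⟩
    nlinarith [hmin _ _ _ _ _ _ _ _ h']

/-- for `0 < γ < α·β`, every one-step feasible action minimizing
`(w₁+w₂) − γ·(next-state storage sum)` achieves grid draw exactly `V₁` and
next-state storage sum exactly `M`. -/
theorem greedy_combined_LP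
    (α β Smax : ℝ) (hα : 0 < α ∧ α ≤ 1) (hβ : 0 < β ∧ β ≤ 1) (hS : 0 < Smax)
    (s₁ s₂ : ℝ) (hs₁ : 0 ≤ s₁ ∧ s₁ ≤ Smax) (hs₂ : 0 ≤ s₂ ∧ s₂ ≤ Smax)
    (E₁ E₂ : ℝ) (γ : ℝ) (hγ : 0 < γ ∧ γ < α * β)
    (M : ℝ)
    (hM : M = sSup {r : ℝ | ∃ w₁ w₂ c₁ c₂ d₁ d₂ x₁₂ x₂₁ : ℝ,
      OneStep α β Smax s₁ s₂ E₁ E₂ w₁ w₂ c₁ c₂ d₁ d₂ x₁₂ x₂₁ ∧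
      w₁ + w₂ ≤ V1 α β Smax s₁ s₂ E₁ E₂ ∧
      (s₁ + α * c₁ - d₁) + (s₂ + α * c₂ - d₂) = r})
    (w₁ w₂ c₁ c₂ d₁ d₂ x₁₂ x₂₁ : ℝ)
    (hfeas : OneStep α β Smax s₁ s₂ E₁ E₂ w₁ w₂ c₁ c₂ d₁ d₂ x₁₂ x₂₁)
    (hmin : ∀ w₁' w₂' c₁' c₂' d₁' d₂' x₁₂' x₂₁' : ℝ,
      OneStep α β Smax s₁ s₂ E₁ E₂ w₁' w₂' c₁' c₂' d₁' d₂' x₁₂' x₂₁' →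
      (w₁ + w₂) - γ * ((s₁ + α * c₁ - d₁) + (s₂ + α * c₂ - d₂)) ≤
        (w₁' + w₂') - γ * ((s₁ + α * c₁' - d₁') + (s₂ + α * c₂' - d₂'))) :
    w₁ + w₂ = V1 α β Smax s₁ s₂ E₁ E₂ ∧
      (s₁ + α * c₁ - d₁) + (s₂ + α * c₂ - d₂) = M :=
  greedy_combined_LP_general α β Smax hα hβ s₁ s₂ hs₁ hs₂ E₁ E₂ γ hγ M hM w₁ w₂ c₁ c₂ d₁ d₂ x₁₂ x₂₁
    hfeas hmin
end

section
/- If β = 1 (lossless energy transfer), then for any initial storage state (σ₁,σ₂) ∈ [0,S_max]², the optimal cost of the two-base-station problem equals the optimal cost of the single-base-station problem with the same efficiency α, combined profile E(t) = E₁(t) + E₂(t), storage capacity 2·S_max, and initial storage σ₁ + σ₂; that is, J*_k(σ₁,σ₂) = J*_single(σ₁+σ₂; E₁+E₂, 2·S_max). -/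
/-- A feasible policy for the single-base-station problem with storage efficiency `α`,
capacity `Sbar`, profile `E`, over slots `{k, …, N}` from initial storage `σ`. -/
def FeasibleSingle (α Sbar : ℝ) (k N : ℕ) (E : ℕ → ℝ) (σ : ℝ)
    (w c d s : ℕ → ℝ) : Prop :=
  s k = σ ∧
  (∀ t ∈ Finset.Icc k N,
    0 ≤ w t ∧ 0 ≤ c t ∧ 0 ≤ d t ∧
      s (t + 1) = s t + α * c t - d t ∧ d t ≤ s t ∧
      0 ≤ E t + w t - c t + α * d t) ∧
  (∀ t ∈ Finset.Icc k (N + 1), 0 ≤ s t ∧ s t ≤ Sbar)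

/-- Optimal cost of the single-base-station problem. -/
noncomputable def JstarSingle (α Sbar : ℝ) (k N : ℕ) (E : ℕ → ℝ) (σ : ℝ) : ℝ :=
  sInf {r : ℝ | ∃ w c d s : ℕ → ℝ, FeasibleSingle α Sbar k N E σ w c d s ∧
    (∑ t ∈ Finset.Icc k N, w t) = r}

open Finset

section PosPart

variable {G : Type*} [AddCommGroup G] [LinearOrder G] [IsOrderedAddMonoid G]

lemma negPart_le_posPart_of_add_nonneg {a b : G} (h : 0 ≤ a + b) : b⁻ ≤ a⁺ := by
  rcases le_total 0 b with hb | hb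
  · rw [negPart_of_nonneg hb]
    exact posPart_nonneg a
  · rw [negPart_of_nonpos hb]
    exact (neg_le_iff_add_nonneg.2 h).trans (le_posPart a)

end PosPart

lemma mul_posPart_div_sub_negPart {α Δ : ℝ} (h : α = 0 → Δ ≤ 0) : α * (Δ⁺ / α) - Δ⁻ = Δ := by
  by_cases hα : α = 0
  · rw [posPart_of_nonpos (h hα), negPart_of_nonpos (h hα)]
    simp
  · rw [mul_div_cancel₀ _ hα, posPart_sub_negPart]

lemma posPart_div_add_posPart_div_sub_le {α c d Δ₁ Δ₂ : ℝ} (hα : 0 ≤ α ∧ α ≤ 1) (hc : 0 ≤ c)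
    (hd : 0 ≤ d) (hstep : Δ₁ + Δ₂ = α * c - d)
    (hco : (0 ≤ Δ₁ ∧ 0 ≤ Δ₂) ∨ (Δ₁ ≤ 0 ∧ Δ₂ ≤ 0)) :
    Δ₁⁺ / α + Δ₂⁺ / α - α * (Δ₁⁻ + Δ₂⁻) ≤ c - α * d := by
  obtain ⟨hα₀, hα₁⟩ := hα
  rcases hco with ⟨h₁, h₂⟩ | ⟨h₁, h₂⟩
  · rw [posPart_of_nonneg h₁, posPart_of_nonneg h₂, negPart_of_nonneg h₁,
      negPart_of_nonneg h₂, ← add_div, hstep]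
    rcases hα₀.eq_or_lt with rfl | hpos
    · simpa using hc
    · have hdα : d ≤ d / α := le_div_self hd hpos hα₁
      have hαd : α * d ≤ d := mul_le_of_le_one_left hd hα₁
      have hdiv : (α * c - d) / α = c - d / α := by field_simp
      linarith
  · rw [posPart_of_nonpos h₁, posPart_of_nonpos h₂, negPart_of_nonpos h₁,
      negPart_of_nonpos h₂]
    have hααc : α * (α * c) ≤ c := by
      rw [← mul_assoc]
      exact mul_le_of_le_one_left hc (mul_le_one₀ hα₁ hα₀ hα₁)
    calc 0 / α + 0 / α - α * (-Δ₁ + -Δ₂) = α * (α * c - d) := by rw [← hstep]; ring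
      _ ≤ c - α * d := by linarith

theorem Feasible.aggregate {α β Smax : ℝ} {k N : ℕ} {E₁ E₂ : ℕ → ℝ} {σ₁ σ₂ : ℝ}
    {w₁ w₂ c₁ c₂ d₁ d₂ x₁₂ x₂₁ s₁ s₂ : ℕ → ℝ} (hβ : β ≤ 1)
    (h : Feasible α β Smax k N E₁ E₂ σ₁ σ₂ w₁ w₂ c₁ c₂ d₁ d₂ x₁₂ x₂₁ s₁ s₂) :
    FeasibleSingle α (2 * Smax) k N (fun t => E₁ t + E₂ t) (σ₁ + σ₂)
      (w₁ + w₂) (c₁ + c₂) (d₁ + d₂) (s₁ + s₂) := by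
  obtain ⟨rfl, rfl, hslot, hbox⟩ := h
  refine ⟨rfl, fun t ht => ?_, fun t ht => ?_⟩
  · obtain ⟨hw₁, hw₂, hc₁, hc₂, hd₁, hd₂, hx₁₂, hx₂₁, hs₁, hs₂, hds₁, hds₂, hbal₁, hbal₂⟩ :=
      hslot t ht
    have hloss : 0 ≤ (1 - β) * (x₁₂ t + x₂₁ t) := mul_nonneg (by linarith) (by linarith)
    simp only [Pi.add_apply]
    exact ⟨by linarith, by linarith, by linarith, by rw [hs₁, hs₂]; ring, by linarith,
      by linarith⟩
  · obtain ⟨h₁, h₁', h₂, h₂'⟩ := hbox t ht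
    simp only [Pi.add_apply]
    exact ⟨by linarith, by linarith⟩

theorem FeasibleSingle.exists_feasible_of_comonotone_split {α Smax Sbar : ℝ} {k N : ℕ} {E₁ E₂ : ℕ → ℝ}
    {σ σ₁ σ₂ : ℝ} {w c d s s₁ s₂ : ℕ → ℝ} (hα : 0 ≤ α ∧ α ≤ 1)
    (h : FeasibleSingle α Sbar k N (fun t => E₁ t + E₂ t) σ w c d s)
    (hs : ∀ t, s₁ t + s₂ t = s t) (hk₁ : s₁ k = σ₁) (hk₂ : s₂ k = σ₂)
    (hbox : ∀ t ∈ Icc k (N + 1), 0 ≤ s₁ t ∧ s₁ t ≤ Smax ∧ 0 ≤ s₂ t ∧ s₂ t ≤ Smax)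
    (hco : ∀ t, (s₁ t ≤ s₁ (t + 1) ∧ s₂ t ≤ s₂ (t + 1)) ∨
      (s₁ (t + 1) ≤ s₁ t ∧ s₂ (t + 1) ≤ s₂ t)) :
    ∃ c₁ c₂ d₁ d₂ x₁₂ x₂₁ : ℕ → ℝ,
      Feasible α 1 Smax k N E₁ E₂ σ₁ σ₂ w 0 c₁ c₂ d₁ d₂ x₁₂ x₂₁ s₁ s₂ := by
  obtain ⟨-, hslot, -⟩ := h
  set Δ₁ : ℕ → ℝ := fun t => s₁ (t + 1) - s₁ t
  set Δ₂ : ℕ → ℝ := fun t => s₂ (t + 1) - s₂ t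
  set A : ℕ → ℝ := fun t => E₁ t + w t - (Δ₁ t)⁺ / α + α * (Δ₁ t)⁻
  set B : ℕ → ℝ := fun t => E₂ t + 0 - (Δ₂ t)⁺ / α + α * (Δ₂ t)⁻
  refine ⟨fun t => (Δ₁ t)⁺ / α, fun t => (Δ₂ t)⁺ / α, fun t => (Δ₁ t)⁻, fun t => (Δ₂ t)⁻,
    fun t => (B t)⁻, fun t => (A t)⁻, hk₁, hk₂, fun t ht => ?_, hbox⟩
  obtain ⟨hw, hc, hd, hstep, -, hbal⟩ := hslot t ht
  obtain ⟨hs₁, -, hs₂, -⟩ := hbox t (by simp only [mem_Icc] at ht ⊢; omega)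
  obtain ⟨hs₁', -, hs₂', -⟩ := hbox (t + 1) (by simp only [mem_Icc] at ht ⊢; omega)
  have hsum : Δ₁ t + Δ₂ t = α * c t - d t := by
    simp only [Δ₁, Δ₂]
    linarith [hs t, hs (t + 1)]
  have hsign : (0 ≤ Δ₁ t ∧ 0 ≤ Δ₂ t) ∨ (Δ₁ t ≤ 0 ∧ Δ₂ t ≤ 0) := by
    simp only [Δ₁, Δ₂, sub_nonneg, sub_nonpos]
    exact hco t
  -- without efficiency the pooled storage cannot grow, hence neither can its shares
  have hnonpos (h₀ : α = 0) : Δ₁ t ≤ 0 ∧ Δ₂ t ≤ 0 := by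
    rw [h₀, zero_mul, zero_sub] at hsum
    rcases hsign with ⟨h₁, h₂⟩ | h
    · constructor <;> linarith
    · exact h
  have hcost := posPart_div_add_posPart_div_sub_le hα hc hd hsum hsign
  have hAB : 0 ≤ A t + B t := by
    simp only [A, B]
    linarith
  refine ⟨hw, le_rfl, div_nonneg (posPart_nonneg _) hα.1, div_nonneg (posPart_nonneg _) hα.1,
    negPart_nonneg _, negPart_nonneg _, negPart_nonneg _, negPart_nonneg _, ?_, ?_, ?_, ?_, ?_, ?_⟩
  · linarith [mul_posPart_div_sub_negPart fun h₀ => (hnonpos h₀).1]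
  · linarith [mul_posPart_div_sub_negPart fun h₀ => (hnonpos h₀).2]
  · exact max_le (by linarith) hs₁
  · exact max_le (by linarith) hs₂
  · show 0 ≤ A t - (B t)⁻ + 1 * (A t)⁻
    linarith [negPart_le_posPart_of_add_nonneg hAB, posPart_sub_negPart (A t)]
  · show 0 ≤ B t - (A t)⁻ + 1 * (B t)⁻
    linarith [negPart_le_posPart_of_add_nonneg (by linarith : 0 ≤ B t + A t),
      posPart_sub_negPart (B t)]

def secondShare (σ₁ M x : ℝ) : ℝ := min M (max 0 (x - σ₁))

section secondShare

variable {σ₁ M : ℝ}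

lemma secondShare_mono : Monotone (secondShare σ₁ M) := fun _ _ hxy =>
  min_le_min_left _ (max_le_max_left _ (by linarith))

lemma sub_secondShare_mono : Monotone fun x => x - secondShare σ₁ M x := by
  intro x y hxy
  simp only [secondShare, min_def, max_def]
  split_ifs <;> linarith

lemma secondShare_mem_Icc (hM : 0 ≤ M) (x : ℝ) :
    0 ≤ secondShare σ₁ M x ∧ secondShare σ₁ M x ≤ M :=
  ⟨le_min hM (le_max_left _ _), min_le_left _ _⟩

lemma sub_secondShare_mem_Icc (hσ₁ : 0 ≤ σ₁ ∧ σ₁ ≤ M) {x : ℝ} (hx₀ : 0 ≤ x) (hx : x ≤ 2 * M) :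
    0 ≤ x - secondShare σ₁ M x ∧ x - secondShare σ₁ M x ≤ M := by
  simp only [secondShare, min_def, max_def]
  split_ifs <;> constructor <;> linarith

lemma secondShare_add {σ₂ : ℝ} (hσ₂ : 0 ≤ σ₂ ∧ σ₂ ≤ M) : secondShare σ₁ M (σ₁ + σ₂) = σ₂ := by
  simp [secondShare, hσ₂.1, hσ₂.2]

end secondShare

theorem FeasibleSingle.exists_feasible {α Smax : ℝ} {k N : ℕ} {E₁ E₂ : ℕ → ℝ}
    {σ₁ σ₂ : ℝ} {w c d s : ℕ → ℝ} (hα : 0 ≤ α ∧ α ≤ 1) (hσ₁ : 0 ≤ σ₁ ∧ σ₁ ≤ Smax)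
    (hσ₂ : 0 ≤ σ₂ ∧ σ₂ ≤ Smax)
    (h : FeasibleSingle α (2 * Smax) k N (fun t => E₁ t + E₂ t) (σ₁ + σ₂) w c d s) :
    ∃ c₁ c₂ d₁ d₂ x₁₂ x₂₁ s₁ s₂ : ℕ → ℝ,
      Feasible α 1 Smax k N E₁ E₂ σ₁ σ₂ w 0 c₁ c₂ d₁ d₂ x₁₂ x₂₁ s₁ s₂ := by
  have hM : 0 ≤ Smax := hσ₁.1.trans hσ₁.2
  obtain ⟨c₁, c₂, d₁, d₂, x₁₂, x₂₁, hsplit⟩ := h.exists_feasible_of_comonotone_split hα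
    (σ₁ := σ₁) (σ₂ := σ₂)
    (s₁ := fun t => s t - secondShare σ₁ Smax (s t)) (s₂ := fun t => secondShare σ₁ Smax (s t))
    (fun t => sub_add_cancel _ _) (by simp only [h.1, secondShare_add hσ₂, add_sub_cancel_right])
    (by simp only [h.1, secondShare_add hσ₂])
    (fun t ht => by
      obtain ⟨hs₀, hs⟩ := h.2.2 t ht
      exact ⟨(sub_secondShare_mem_Icc hσ₁ hs₀ hs).1, (sub_secondShare_mem_Icc hσ₁ hs₀ hs).2,
        secondShare_mem_Icc hM _⟩)
    (fun t => (le_total (s t) (s (t + 1))).imp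
      (fun hle => ⟨sub_secondShare_mono hle, secondShare_mono hle⟩)
      (fun hle => ⟨sub_secondShare_mono hle, secondShare_mono hle⟩))
  exact ⟨c₁, c₂, d₁, d₂, x₁₂, x₂₁, _, _, hsplit⟩

theorem beta_one_reduces_to_single_BS_general
    (α Smax : ℝ) (hα : 0 ≤ α ∧ α ≤ 1)
    (k N : ℕ) (E₁ E₂ : ℕ → ℝ)
    (σ₁ σ₂ : ℝ) (hσ₁ : 0 ≤ σ₁ ∧ σ₁ ≤ Smax) (hσ₂ : 0 ≤ σ₂ ∧ σ₂ ≤ Smax) :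
    Jstar α 1 Smax k N E₁ E₂ σ₁ σ₂ =
      JstarSingle α (2 * Smax) k N (fun t => E₁ t + E₂ t) (σ₁ + σ₂) := by
  unfold Jstar JstarSingle
  congr 1
  ext r
  constructor
  · rintro ⟨w₁, w₂, c₁, c₂, d₁, d₂, x₁₂, x₂₁, s₁, s₂, h, rfl⟩
    exact ⟨_, _, _, _, h.aggregate le_rfl, rfl⟩
  · rintro ⟨w, c, d, s, h, rfl⟩
    obtain ⟨c₁, c₂, d₁, d₂, x₁₂, x₂₁, s₁, s₂, hsplit⟩ := h.exists_feasible hα hσ₁ hσ₂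
    exact ⟨w, 0, c₁, c₂, d₁, d₂, x₁₂, x₂₁, s₁, s₂, hsplit, by simp⟩

/-- with lossless transfer (`β = 1`) the two-BS problem reduces to a
single BS with combined profile `E₁ + E₂`, capacity `2·Smax`, initial storage `σ₁+σ₂`. -/
theorem beta_one_reduces_to_single_BS
    (α Smax : ℝ) (hα : 0 ≤ α ∧ α ≤ 1) (hS : 0 < Smax)
    (k N : ℕ) (hkN : k ≤ N) (E₁ E₂ : ℕ → ℝ)
    (σ₁ σ₂ : ℝ) (hσ₁ : 0 ≤ σ₁ ∧ σ₁ ≤ Smax) (hσ₂ : 0 ≤ σ₂ ∧ σ₂ ≤ Smax) :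
    Jstar α 1 Smax k N E₁ E₂ σ₁ σ₂ =
      JstarSingle α (2 * Smax) k N (fun t => E₁ t + E₂ t) (σ₁ + σ₂) :=
  beta_one_reduces_to_single_BS_general α Smax hα k N E₁ E₂ σ₁ σ₂ hσ₁ hσ₂
end

section
/- (Monotonicity bound on the optimal cost-to-go.) Suppose (σ₁,σ₂), (σ₁',σ₂') ∈ [0,S_max]² with σ₁ ≤ σ₁' and σ₂ ≤ σ₂'. Then J*_k(σ₁,σ₂) ≤ J*_k(σ₁',σ₂') + α·((σ₁'−σ₁) + (σ₂'−σ₂)). -/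
/-!
Start each storage `σᵢ' - σᵢ` lower, keep the charging schedule, and cut the discharges greedily
until the missing energy is used up, buying their lost output from the grid instead. The new
storage levels stay between zero and the old ones, and since a discharge `d` delivers only `α * d`,
the extra grid draw is at most `α` times the missing energy.
-/

open Finset

structure IsStorageRun (α Smax : ℝ) (k N : ℕ) (c d s : ℕ → ℝ) : Prop where
  charge_nonneg : ∀ t ∈ Icc k N, 0 ≤ c t
  discharge_nonneg : ∀ t ∈ Icc k N, 0 ≤ d t
  level_succ : ∀ t ∈ Icc k N, s (t + 1) = s t + α * c t - d t
  discharge_le_level : ∀ t ∈ Icc k N, d t ≤ s t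
  level_nonneg : ∀ t ∈ Icc k (N + 1), 0 ≤ s t
  level_le : ∀ t ∈ Icc k (N + 1), s t ≤ Smax

theorem feasible_iff {α β Smax : ℝ} {k N : ℕ} {E₁ E₂ : ℕ → ℝ} {σ₁ σ₂ : ℝ}
    {w₁ w₂ c₁ c₂ d₁ d₂ x₁₂ x₂₁ s₁ s₂ : ℕ → ℝ} :
    Feasible α β Smax k N E₁ E₂ σ₁ σ₂ w₁ w₂ c₁ c₂ d₁ d₂ x₁₂ x₂₁ s₁ s₂ ↔
      s₁ k = σ₁ ∧ s₂ k = σ₂ ∧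
      IsStorageRun α Smax k N c₁ d₁ s₁ ∧ IsStorageRun α Smax k N c₂ d₂ s₂ ∧
      ∀ t ∈ Icc k N, 0 ≤ w₁ t ∧ 0 ≤ w₂ t ∧ 0 ≤ x₁₂ t ∧ 0 ≤ x₂₁ t ∧
        0 ≤ E₁ t + w₁ t - c₁ t + α * d₁ t - x₁₂ t + β * x₂₁ t ∧
        0 ≤ E₂ t + w₂ t - c₂ t + α * d₂ t - x₂₁ t + β * x₁₂ t := by
  constructor
  · rintro ⟨hs₁, hs₂, hslot, hlevel⟩
    refine ⟨hs₁, hs₂, ⟨?_, ?_, ?_, ?_, ?_, ?_⟩, ⟨?_, ?_, ?_, ?_, ?_, ?_⟩, ?_⟩ <;> intro t ht <;>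
      first
      | have := hslot t ht; tauto
      | have := hlevel t ht; tauto
  · rintro ⟨hs₁, hs₂, r₁, r₂, hgrid⟩
    refine ⟨hs₁, hs₂, fun t ht ↦ ?_, fun t ht ↦
      ⟨r₁.level_nonneg t ht, r₁.level_le t ht, r₂.level_nonneg t ht, r₂.level_le t ht⟩⟩
    obtain ⟨h₁, h₂, h₃, h₄, h₅, h₆⟩ := hgrid t ht
    exact ⟨h₁, h₂, r₁.charge_nonneg t ht, r₂.charge_nonneg t ht, r₁.discharge_nonneg t ht,
      r₂.discharge_nonneg t ht, h₃, h₄, r₁.level_succ t ht, r₂.level_succ t ht,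
      r₁.discharge_le_level t ht, r₂.discharge_le_level t ht, h₅, h₆⟩

/-- How far a run started `Δ` lower lags behind the original one when every discharge is first
used to close the gap. -/
noncomputable def storageGap (k : ℕ) (Δ : ℝ) (d : ℕ → ℝ) : ℕ → ℝ
  | 0 => Δ
  | t + 1 => if k ≤ t then max 0 (storageGap k Δ d t - d t) else Δ

namespace storageGap

variable {k : ℕ} {Δ : ℝ} {d : ℕ → ℝ}

theorem apply_self : storageGap k Δ d k = Δ := by
  cases k <;> simp [storageGap]

theorem succ_of_le {t : ℕ} (h : k ≤ t) :
    storageGap k Δ d (t + 1) = max 0 (storageGap k Δ d t - d t) :=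
  if_pos h

theorem nonneg (hΔ : 0 ≤ Δ) : ∀ t, 0 ≤ storageGap k Δ d t
  | 0 => hΔ
  | t + 1 => by
    by_cases h : k ≤ t
    · exact (succ_of_le h).symm ▸ le_max_left _ _
    · simpa [storageGap, h] using hΔ

theorem succ_le {t : ℕ} (hΔ : 0 ≤ Δ) (h : k ≤ t) (hd : 0 ≤ d t) :
    storageGap k Δ d (t + 1) ≤ storageGap k Δ d t := by
  rw [succ_of_le h]
  exact max_le (nonneg hΔ t) (by linarith)

theorem sum_sub_succ_le (hΔ : 0 ≤ Δ) (N : ℕ) :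
    ∑ t ∈ Icc k N, (storageGap k Δ d t - storageGap k Δ d (t + 1)) ≤ Δ := by
  rcases le_or_gt k N with hkN | hNk
  · have telescope := sum_Icc_sub hkN (storageGap k Δ d)
    rw [sum_sub_distrib] at telescope ⊢
    linarith [nonneg (k := k) (d := d) hΔ (N + 1), apply_self (k := k) (Δ := Δ) (d := d)]
  · simp [Icc_eq_empty_of_lt hNk, hΔ]

end storageGap

namespace IsStorageRun

variable {α Smax : ℝ} {k N : ℕ} {c d s : ℕ → ℝ} {Δ : ℝ}

theorem storageGap_le_level (hα : 0 ≤ α) (h : IsStorageRun α Smax k N c d s) (hΔ : Δ ≤ s k) :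
    ∀ t ∈ Icc k (N + 1), storageGap k Δ d t ≤ s t := by
  intro t ht
  obtain ⟨hkt, htN⟩ := mem_Icc.1 ht
  induction t, hkt using Nat.le_induction with
  | base => rwa [storageGap.apply_self]
  | succ t hkt ih =>
    have hslot : t ∈ Icc k N := mem_Icc.2 ⟨hkt, by omega⟩
    have hgap := ih (mem_Icc.2 ⟨hkt, by omega⟩) (by omega)
    have hcharge := mul_nonneg hα (h.charge_nonneg t hslot)
    rw [storageGap.succ_of_le hkt]
    exact max_le (h.level_nonneg _ ht) (by linarith [h.level_succ t hslot])

theorem exists_start_sub (hα : 0 ≤ α) (h : IsStorageRun α Smax k N c d s) (hΔ₀ : 0 ≤ Δ)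
    (hΔ : Δ ≤ s k) :
    ∃ d' s', IsStorageRun α Smax k N c d' s' ∧ s' k = s k - Δ ∧
      (∀ t ∈ Icc k N, d' t ≤ d t) ∧ ∑ t ∈ Icc k N, (d t - d' t) ≤ Δ := by
  set g := storageGap k Δ d
  have hgap := h.storageGap_le_level hα hΔ
  have hgap_succ : ∀ t ∈ Icc k N, g (t + 1) = max 0 (g t - d t) :=
    fun t ht ↦ storageGap.succ_of_le (mem_Icc.1 ht).1
  have hslot : ∀ t ∈ Icc k N, t ∈ Icc k (N + 1) :=
    fun t ht ↦ mem_Icc.2 ⟨(mem_Icc.1 ht).1, by have := (mem_Icc.1 ht).2; omega⟩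
  refine ⟨fun t ↦ d t - (g t - g (t + 1)), fun t ↦ s t - g t,
    ⟨h.charge_nonneg, fun t ht ↦ ?_, fun t ht ↦ ?_, fun t ht ↦ ?_, fun t ht ↦ ?_,
      fun t ht ↦ ?_⟩, ?_, fun t ht ↦ ?_, ?_⟩
  · linarith [hgap_succ t ht ▸ le_max_right 0 (g t - d t)]
  · rw [h.level_succ t ht]; ring
  · have : g (t + 1) ≤ s t - d t := hgap_succ t ht ▸
      max_le (sub_nonneg.2 (h.discharge_le_level t ht)) (by linarith [hgap t (hslot t ht)])
    linarith
  · linarith [hgap t ht]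
  · linarith [h.level_le t ht, storageGap.nonneg (k := k) (d := d) hΔ₀ t]
  · simp [g, storageGap.apply_self]
  · linarith [storageGap.succ_le (d := d) hΔ₀ (mem_Icc.1 ht).1 (h.discharge_nonneg t ht)]
  · simpa only [sub_sub_cancel] using storageGap.sum_sub_succ_le hΔ₀ N

end IsStorageRun

section CostToGo

variable {α β Smax : ℝ} {k N : ℕ} {E₁ E₂ : ℕ → ℝ} {σ₁ σ₂ σ₁' σ₂' : ℝ}
  {w₁ w₂ c₁ c₂ d₁ d₂ x₁₂ x₂₁ s₁ s₂ : ℕ → ℝ}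

theorem feasible_idle (hσ₁ : 0 ≤ σ₁ ∧ σ₁ ≤ Smax) (hσ₂ : 0 ≤ σ₂ ∧ σ₂ ≤ Smax) :
    Feasible α β Smax k N E₁ E₂ σ₁ σ₂ (fun t ↦ max 0 (-E₁ t)) (fun t ↦ max 0 (-E₂ t))
      0 0 0 0 0 0 (fun _ ↦ σ₁) (fun _ ↦ σ₂) := by
  refine ⟨rfl, rfl, fun t _ ↦ ?_, fun _ _ ↦ ⟨hσ₁.1, hσ₁.2, hσ₂.1, hσ₂.2⟩⟩
  simp only [Pi.zero_apply, mul_zero, add_zero, sub_zero, le_refl, le_max_left, hσ₁.1, hσ₂.1,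
    true_and]
  exact ⟨by linarith [le_max_right 0 (-E₁ t)], by linarith [le_max_right 0 (-E₂ t)]⟩

theorem jstar_le_of_feasible
    (hF : Feasible α β Smax k N E₁ E₂ σ₁ σ₂ w₁ w₂ c₁ c₂ d₁ d₂ x₁₂ x₂₁ s₁ s₂) :
    Jstar α β Smax k N E₁ E₂ σ₁ σ₂ ≤ ∑ t ∈ Icc k N, (w₁ t + w₂ t) := by
  refine csInf_le ⟨0, ?_⟩ ⟨_, _, _, _, _, _, _, _, _, _, hF, rfl⟩
  rintro r ⟨w₁, w₂, c₁, c₂, d₁, d₂, x₁₂, x₂₁, s₁, s₂, hF, rfl⟩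
  have hgrid := (feasible_iff.1 hF).2.2.2.2
  exact sum_nonneg fun t ht ↦ add_nonneg (hgrid t ht).1 (hgrid t ht).2.1

theorem jstar_le_cost_add (hα : 0 ≤ α) (hσ₁ : 0 ≤ σ₁) (hσ₂ : 0 ≤ σ₂) (h₁ : σ₁ ≤ σ₁')
    (h₂ : σ₂ ≤ σ₂')
    (hF : Feasible α β Smax k N E₁ E₂ σ₁' σ₂' w₁ w₂ c₁ c₂ d₁ d₂ x₁₂ x₂₁ s₁ s₂) :
    Jstar α β Smax k N E₁ E₂ σ₁ σ₂ ≤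
      ∑ t ∈ Icc k N, (w₁ t + w₂ t) + α * ((σ₁' - σ₁) + (σ₂' - σ₂)) := by
  obtain ⟨hs₁, hs₂, run₁, run₂, hgrid⟩ := feasible_iff.1 hF
  obtain ⟨d₁', s₁', run₁', hs₁', hd₁, hsum₁⟩ :=
    run₁.exists_start_sub hα (sub_nonneg.2 h₁) (by linarith)
  obtain ⟨d₂', s₂', run₂', hs₂', hd₂, hsum₂⟩ :=
    run₂.exists_start_sub hα (sub_nonneg.2 h₂) (by linarith)
  have hF' : Feasible α β Smax k N E₁ E₂ σ₁ σ₂ (fun t ↦ w₁ t + α * (d₁ t - d₁' t))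
      (fun t ↦ w₂ t + α * (d₂ t - d₂' t)) c₁ c₂ d₁' d₂' x₁₂ x₂₁ s₁' s₂' := by
    refine feasible_iff.2 ⟨by rw [hs₁', hs₁]; ring, by rw [hs₂', hs₂]; ring, run₁', run₂',
      fun t ht ↦ ?_⟩
    obtain ⟨hw₁, hw₂, hx₁₂, hx₂₁, hb₁, hb₂⟩ := hgrid t ht
    have hbuy₁ := mul_nonneg hα (sub_nonneg.2 (hd₁ t ht))
    have hbuy₂ := mul_nonneg hα (sub_nonneg.2 (hd₂ t ht))
    exact ⟨by linarith, by linarith, hx₁₂, hx₂₁, by linarith, by linarith⟩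
  calc Jstar α β Smax k N E₁ E₂ σ₁ σ₂
      ≤ ∑ t ∈ Icc k N, (w₁ t + α * (d₁ t - d₁' t) + (w₂ t + α * (d₂ t - d₂' t))) :=
        jstar_le_of_feasible hF'
    _ = ∑ t ∈ Icc k N, (w₁ t + w₂ t) +
          α * (∑ t ∈ Icc k N, (d₁ t - d₁' t) + ∑ t ∈ Icc k N, (d₂ t - d₂' t)) := by
        simp only [sum_add_distrib, mul_add, mul_sum]; ring
    _ ≤ ∑ t ∈ Icc k N, (w₁ t + w₂ t) + α * ((σ₁' - σ₁) + (σ₂' - σ₂)) := by gcongr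

end CostToGo

theorem cost_to_go_monotonicity_bound_general
    (α β Smax : ℝ) (hα : 0 ≤ α ∧ α ≤ 1)
    (k N : ℕ) (E₁ E₂ : ℕ → ℝ)
    (σ₁ σ₂ σ₁' σ₂' : ℝ)
    (hσ₁ : 0 ≤ σ₁ ∧ σ₁ ≤ Smax) (hσ₂ : 0 ≤ σ₂ ∧ σ₂ ≤ Smax)
    (hσ₁' : 0 ≤ σ₁' ∧ σ₁' ≤ Smax) (hσ₂' : 0 ≤ σ₂' ∧ σ₂' ≤ Smax)
    (h₁ : σ₁ ≤ σ₁') (h₂ : σ₂ ≤ σ₂') :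
    Jstar α β Smax k N E₁ E₂ σ₁ σ₂ ≤
      Jstar α β Smax k N E₁ E₂ σ₁' σ₂' + α * ((σ₁' - σ₁) + (σ₂' - σ₂)) := by
  refine sub_le_iff_le_add.1 (le_csInf ⟨_, _, _, _, _, _, _, _, _, _, _,
    feasible_idle hσ₁' hσ₂', rfl⟩ ?_)
  rintro r ⟨w₁, w₂, c₁, c₂, d₁, d₂, x₁₂, x₂₁, s₁, s₂, hF, rfl⟩
  exact sub_le_iff_le_add.2 (jstar_le_cost_add hα.1 hσ₁.1 hσ₂.1 h₁ h₂ hF)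

/-- Proposition 2: monotonicity bound on the optimal cost-to-go. -/
theorem cost_to_go_monotonicity_bound
    (α β Smax : ℝ) (hα : 0 ≤ α ∧ α ≤ 1) (hβ : 0 ≤ β ∧ β ≤ 1) (hS : 0 < Smax)
    (k N : ℕ) (hkN : k ≤ N) (E₁ E₂ : ℕ → ℝ)
    (σ₁ σ₂ σ₁' σ₂' : ℝ)
    (hσ₁ : 0 ≤ σ₁ ∧ σ₁ ≤ Smax) (hσ₂ : 0 ≤ σ₂ ∧ σ₂ ≤ Smax)
    (hσ₁' : 0 ≤ σ₁' ∧ σ₁' ≤ Smax) (hσ₂' : 0 ≤ σ₂' ∧ σ₂' ≤ Smax)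
    (h₁ : σ₁ ≤ σ₁') (h₂ : σ₂ ≤ σ₂') :
    Jstar α β Smax k N E₁ E₂ σ₁ σ₂ ≤
      Jstar α β Smax k N E₁ E₂ σ₁' σ₂' + α * ((σ₁' - σ₁) + (σ₂' - σ₂)) :=
  cost_to_go_monotonicity_bound_general α β Smax hα k N E₁ E₂ σ₁ σ₂ σ₁' σ₂' hσ₁ hσ₂ hσ₁' hσ₂' h₁ h₂
end

section
/- (Energy is never profitably drawn from the grid to increase storage.) For any Δ₁, Δ₂ ≥ 0 such that σ₁ + α·Δ₁ ≤ S_max and σ₂ + α·Δ₂ ≤ S_max, setting Δ_W = Δ₁ + Δ₂ one has J*_k(σ₁ + α·Δ₁, σ₂ + α·Δ₂) + Δ_W ≥ J*_k(σ₁, σ₂). -/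
/-!
A policy started at the charged state is replayed from `(σ₁, σ₂)` with changes in slot `k` only.
There station `i` can discharge only `d_i k - δ` with `δ = max 0 (d_i k - σ_i) ≤ α Δ_i`; it draws
the lost `α δ` from the grid, and also `Δ_i - δ / α` to charge, which restores the storage level
`s_i (k + 1)` of the original policy. From then on the two policies coincide, and the extra grid
draw `Δ_i - δ / α + α δ` is at most `Δ_i` because `α ≤ 1`.
-/

open Finset

/-- The constraints of a single station, with the transfers folded into its net profile `F`. -/
structure StationFeasible (α Smax : ℝ) (k N : ℕ) (F : ℕ → ℝ) (σ : ℝ) (w c d s : ℕ → ℝ) :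
    Prop where
  init : s k = σ
  slot : ∀ t ∈ Icc k N, 0 ≤ w t ∧ 0 ≤ c t ∧ 0 ≤ d t ∧ s (t + 1) = s t + α * c t - d t ∧
    d t ≤ s t ∧ 0 ≤ F t + w t - c t + α * d t
  storage : ∀ t ∈ Icc k (N + 1), 0 ≤ s t ∧ s t ≤ Smax

theorem feasible_iff_stationFeasible {α β Smax : ℝ} {k N : ℕ} {E₁ E₂ : ℕ → ℝ} {σ₁ σ₂ : ℝ}
    {w₁ w₂ c₁ c₂ d₁ d₂ x₁₂ x₂₁ s₁ s₂ : ℕ → ℝ} :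
    Feasible α β Smax k N E₁ E₂ σ₁ σ₂ w₁ w₂ c₁ c₂ d₁ d₂ x₁₂ x₂₁ s₁ s₂ ↔
      (∀ t ∈ Icc k N, 0 ≤ x₁₂ t ∧ 0 ≤ x₂₁ t) ∧
      StationFeasible α Smax k N (fun t ↦ E₁ t - x₁₂ t + β * x₂₁ t) σ₁ w₁ c₁ d₁ s₁ ∧
      StationFeasible α Smax k N (fun t ↦ E₂ t - x₂₁ t + β * x₁₂ t) σ₂ w₂ c₂ d₂ s₂ := by
  constructor
  · rintro ⟨hs₁, hs₂, hslot, hstorage⟩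
    refine ⟨fun t ht ↦ ?_, ⟨hs₁, fun t ht ↦ ?_, fun t ht ↦ ?_⟩,
      ⟨hs₂, fun t ht ↦ ?_, fun t ht ↦ ?_⟩⟩
    · obtain ⟨-, -, -, -, -, -, hx₁₂, hx₂₁, -⟩ := hslot t ht
      exact ⟨hx₁₂, hx₂₁⟩
    · obtain ⟨hw, -, hc, -, hd, -, -, -, hdyn, -, hds, -, hbal, -⟩ := hslot t ht
      exact ⟨hw, hc, hd, hdyn, hds, by linarith⟩
    · exact ⟨(hstorage t ht).1, (hstorage t ht).2.1⟩
    · obtain ⟨-, hw, -, hc, -, hd, -, -, -, hdyn, -, hds, -, hbal⟩ := hslot t ht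
      exact ⟨hw, hc, hd, hdyn, hds, by linarith⟩
    · exact ⟨(hstorage t ht).2.2.1, (hstorage t ht).2.2.2⟩
  · rintro ⟨hx, ⟨hs₁, hslot₁, hstorage₁⟩, ⟨hs₂, hslot₂, hstorage₂⟩⟩
    refine ⟨hs₁, hs₂, fun t ht ↦ ?_, fun t ht ↦ ⟨?_, ?_, ?_, ?_⟩⟩
    · obtain ⟨hw₁, hc₁, hd₁, hdyn₁, hds₁, hbal₁⟩ := hslot₁ t ht
      obtain ⟨hw₂, hc₂, hd₂, hdyn₂, hds₂, hbal₂⟩ := hslot₂ t ht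
      exact ⟨hw₁, hw₂, hc₁, hc₂, hd₁, hd₂, (hx t ht).1, (hx t ht).2, hdyn₁, hdyn₂, hds₁, hds₂,
        by linarith, by linarith⟩
    exacts [(hstorage₁ t ht).1, (hstorage₁ t ht).2, (hstorage₂ t ht).1, (hstorage₂ t ht).2]

theorem stationFeasible_idle {α Smax σ : ℝ} (k N : ℕ) (F : ℕ → ℝ) (hσ₀ : 0 ≤ σ)
    (hσ : σ ≤ Smax) :
    StationFeasible α Smax k N F σ (fun t ↦ max 0 (-F t)) 0 0 (fun _ ↦ σ) where
  init := rfl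
  slot t _ := by
    refine ⟨le_max_left _ _, le_rfl, le_rfl, by simp, hσ₀, ?_⟩
    show 0 ≤ F t + max 0 (-F t) - 0 + α * 0
    linarith [le_max_right 0 (-F t)]
  storage _ _ := ⟨hσ₀, hσ⟩

/-- How one station's slot-`k` decision `d` taken at storage `σ + α Δ` is replayed at storage
`σ`: discharge `θ`, charge `p` more and draw `e` more from the grid. -/
theorem exists_discharge_repair {α σ Δ d : ℝ} (hα₀ : 0 ≤ α) (hα₁ : α ≤ 1) (hσ : 0 ≤ σ)
    (hΔ : 0 ≤ Δ) (hd₀ : 0 ≤ d) (hd : d ≤ σ + α * Δ) :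
    ∃ θ p e : ℝ, 0 ≤ θ ∧ θ ≤ σ ∧ 0 ≤ p ∧ 0 ≤ e ∧ e ≤ Δ ∧
      α * p - θ = α * Δ - d ∧ e - p + α * θ = α * d := by
  rcases hα₀.eq_or_lt with rfl | hα
  · exact ⟨d, 0, 0, hd₀, by simpa using hd, le_rfl, le_rfl, hΔ, by ring, by ring⟩
  set δ := max 0 (d - σ)
  have hδ₀ : 0 ≤ δ := le_max_left _ _
  have hδ : d - σ ≤ δ := le_max_right _ _
  have hδd : δ ≤ d := max_le hd₀ (by linarith)
  have hδΔ : δ / α ≤ Δ := by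
    rw [div_le_iff₀ hα]
    exact max_le (by positivity) (by linarith)
  have hαδ : α * δ ≤ δ / α := by
    rw [le_div_iff₀ hα]
    nlinarith [mul_le_one₀ hα₁ hα₀ hα₁]
  refine ⟨d - δ, Δ - δ / α, Δ - δ / α + α * δ, by linarith, by linarith, by linarith,
    by positivity, by linarith, ?_, by ring⟩
  rw [mul_sub, mul_div_cancel₀ _ hα.ne']
  ring

theorem StationFeasible.exists_of_charged {α Smax σ Δ : ℝ} {k N : ℕ} {F w c d s : ℕ → ℝ}
    (hα₀ : 0 ≤ α) (hα₁ : α ≤ 1) (hσ : 0 ≤ σ) (hΔ : 0 ≤ Δ) (hkN : k ≤ N)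
    (h : StationFeasible α Smax k N F (σ + α * Δ) w c d s) :
    ∃ w' c' d' s' : ℕ → ℝ, StationFeasible α Smax k N F σ w' c' d' s' ∧
      ∑ t ∈ Icc k N, w' t ≤ ∑ t ∈ Icc k N, w t + Δ := by
  have hk : k ∈ Icc k N := mem_Icc.2 ⟨le_rfl, hkN⟩
  obtain ⟨hwk, hck, hdk, hdynk, hdsk, hbalk⟩ := h.slot k hk
  rw [h.init] at hdynk hdsk
  obtain ⟨θ, p, e, hθ₀, hθ, hp, he₀, he, hstore, hbal⟩ :=
    exists_discharge_repair hα₀ hα₁ hσ hΔ hdk hdsk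
  have hσmax : σ ≤ Smax := by
    have hsk := (h.storage k (mem_Icc.2 ⟨le_rfl, by omega⟩)).2
    rw [h.init] at hsk
    linarith [mul_nonneg hα₀ hΔ]
  refine ⟨w + Pi.single k e, c + Pi.single k p, Function.update d k θ, Function.update s k σ,
    ⟨by simp, fun t ht ↦ ?_, fun t ht ↦ ?_⟩, ?_⟩
  · have hkt : t + 1 ≠ k := by have := (mem_Icc.1 ht).1; omega
    rcases eq_or_ne t k with rfl | htk
    · simp only [Pi.add_apply, Pi.single_eq_same, Function.update_self,
        Function.update_of_ne hkt]
      refine ⟨by linarith, by linarith, hθ₀, by linear_combination hdynk - hstore, hθ, ?_⟩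
      linarith
    · simpa [htk, hkt] using h.slot t ht
  · rcases eq_or_ne t k with rfl | htk
    · simpa using ⟨hσ, hσmax⟩
    · simpa [htk] using h.storage t ht
  · simp only [Pi.add_apply, sum_add_distrib, sum_pi_single', hk, if_true]
    linarith

theorem Jstar_le_of_feasible {α β Smax : ℝ} {k N : ℕ} {E₁ E₂ : ℕ → ℝ} {σ₁ σ₂ : ℝ}
    {w₁ w₂ c₁ c₂ d₁ d₂ x₁₂ x₂₁ s₁ s₂ : ℕ → ℝ}
    (h : Feasible α β Smax k N E₁ E₂ σ₁ σ₂ w₁ w₂ c₁ c₂ d₁ d₂ x₁₂ x₂₁ s₁ s₂) :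
    Jstar α β Smax k N E₁ E₂ σ₁ σ₂ ≤ ∑ t ∈ Icc k N, (w₁ t + w₂ t) := by
  refine csInf_le ⟨0, ?_⟩ ⟨_, _, _, _, _, _, _, _, _, _, h, rfl⟩
  rintro _ ⟨w₁, w₂, _, _, _, _, _, _, _, _, hF, rfl⟩
  exact sum_nonneg fun t ht ↦ add_nonneg (hF.2.2.1 t ht).1 (hF.2.2.1 t ht).2.1

theorem grid_energy_not_for_storage_general
    (α β Smax : ℝ) (hα : 0 ≤ α ∧ α ≤ 1)
    (k N : ℕ) (hkN : k ≤ N) (E₁ E₂ : ℕ → ℝ)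
    (σ₁ σ₂ : ℝ) (hσ₁ : 0 ≤ σ₁ ∧ σ₁ ≤ Smax) (hσ₂ : 0 ≤ σ₂ ∧ σ₂ ≤ Smax)
    (Δ₁ Δ₂ : ℝ) (hΔ₁ : 0 ≤ Δ₁) (hΔ₂ : 0 ≤ Δ₂)
    (hcap₁ : σ₁ + α * Δ₁ ≤ Smax) (hcap₂ : σ₂ + α * Δ₂ ≤ Smax) :
    Jstar α β Smax k N E₁ E₂ σ₁ σ₂ ≤
      Jstar α β Smax k N E₁ E₂ (σ₁ + α * Δ₁) (σ₂ + α * Δ₂) + (Δ₁ + Δ₂) := by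
  obtain ⟨hα₀, hα₁⟩ := hα
  have hne : Set.Nonempty {r : ℝ | ∃ w₁ w₂ c₁ c₂ d₁ d₂ x₁₂ x₂₁ s₁ s₂ : ℕ → ℝ,
      Feasible α β Smax k N E₁ E₂ (σ₁ + α * Δ₁) (σ₂ + α * Δ₂)
        w₁ w₂ c₁ c₂ d₁ d₂ x₁₂ x₂₁ s₁ s₂ ∧ (∑ t ∈ Icc k N, (w₁ t + w₂ t)) = r} :=
    ⟨_, _, _, _, _, _, _, 0, 0, _, _, feasible_iff_stationFeasible.2
      ⟨fun _ _ ↦ ⟨le_rfl, le_rfl⟩,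
        stationFeasible_idle k N _ (by have := hσ₁.1; positivity) hcap₁,
        stationFeasible_idle k N _ (by have := hσ₂.1; positivity) hcap₂⟩, rfl⟩
  rw [← sub_le_iff_le_add]
  refine le_csInf hne ?_
  rintro _ ⟨w₁, w₂, c₁, c₂, d₁, d₂, x₁₂, x₂₁, s₁, s₂, hF, rfl⟩
  obtain ⟨hx, h₁, h₂⟩ := feasible_iff_stationFeasible.1 hF
  obtain ⟨w₁', c₁', d₁', s₁', h₁', hw₁⟩ := h₁.exists_of_charged hα₀ hα₁ hσ₁.1 hΔ₁ hkN
  obtain ⟨w₂', c₂', d₂', s₂', h₂', hw₂⟩ := h₂.exists_of_charged hα₀ hα₁ hσ₂.1 hΔ₂ hkN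
  have hJ := Jstar_le_of_feasible (feasible_iff_stationFeasible.2 ⟨hx, h₁', h₂'⟩)
  rw [sum_add_distrib] at hJ ⊢
  linarith

/-- Corollary 1: energy is never profitably drawn from the grid to
increase storage. -/
theorem grid_energy_not_for_storage
    (α β Smax : ℝ) (hα : 0 ≤ α ∧ α ≤ 1) (hβ : 0 ≤ β ∧ β ≤ 1) (hS : 0 < Smax)
    (k N : ℕ) (hkN : k ≤ N) (E₁ E₂ : ℕ → ℝ)
    (σ₁ σ₂ : ℝ) (hσ₁ : 0 ≤ σ₁ ∧ σ₁ ≤ Smax) (hσ₂ : 0 ≤ σ₂ ∧ σ₂ ≤ Smax)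
    (Δ₁ Δ₂ : ℝ) (hΔ₁ : 0 ≤ Δ₁) (hΔ₂ : 0 ≤ Δ₂)
    (hcap₁ : σ₁ + α * Δ₁ ≤ Smax) (hcap₂ : σ₂ + α * Δ₂ ≤ Smax) :
    Jstar α β Smax k N E₁ E₂ σ₁ σ₂ ≤
      Jstar α β Smax k N E₁ E₂ (σ₁ + α * Δ₁) (σ₂ + α * Δ₂) + (Δ₁ + Δ₂) :=
  grid_energy_not_for_storage_general α β Smax hα k N hkN E₁ E₂ σ₁ σ₂ hσ₁ hσ₂ Δ₁ Δ₂ hΔ₁ hΔ₂ hcap₁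
    hcap₂
end

section
/- (Sharpened storage bound when BS 1 always has a surplus.) Suppose E₁(t) ≥ 0 for all t ∈ {k,…,N}, and let Δ ≥ 0 satisfy σ₁ + Δ ≤ S_max. Then J*_k(σ₁, σ₂) ≤ J*_k(σ₁ + Δ, σ₂) + α·β·Δ. -/
open Finset

lemma csInf_le_csInf_add {G : Type*} [ConditionallyCompleteLattice G] [AddCommGroup G]
    [IsOrderedAddMonoid G] {A B : Set G} {c : G} (hA : BddBelow A) (hB : B.Nonempty)
    (h : ∀ b ∈ B, ∃ a ∈ A, a ≤ b + c) : sInf A ≤ sInf B + c := by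
  rw [← sub_le_iff_le_add]
  refine le_csInf hB fun b hb => ?_
  obtain ⟨a, ha, hab⟩ := h b hb
  exact sub_le_iff_le_add.2 ((csInf_le hA ha).trans hab)

lemma exists_roundTrip {α c d : ℝ} (hα : 0 ≤ α) (hc : 0 ≤ c) (hd : 0 ≤ d) :
    ∃ e, 0 ≤ e ∧ e ≤ c ∧ α * e ≤ d ∧ (e = c ∨ α * e = d) := by
  rcases le_or_gt (α * c) d with h | h
  · exact ⟨c, hc, le_rfl, h, .inl rfl⟩
  · have hα' : 0 < α := hα.lt_of_ne (by rintro rfl; linarith)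
    refine ⟨d / α, div_nonneg hd hα, (div_le_iff₀ hα').2 (by linarith), ?_, .inr ?_⟩ <;>
      rw [mul_div_cancel₀ _ hα'.ne']

structure Policy where
  w₁ : ℕ → ℝ
  w₂ : ℕ → ℝ
  c₁ : ℕ → ℝ
  c₂ : ℕ → ℝ
  d₁ : ℕ → ℝ
  d₂ : ℕ → ℝ
  x₁₂ : ℕ → ℝ
  x₂₁ : ℕ → ℝ
  s₁ : ℕ → ℝ
  s₂ : ℕ → ℝ

namespace Policy

def IsFeasible (α β Smax : ℝ) (k N : ℕ) (E₁ E₂ : ℕ → ℝ) (σ₁ σ₂ : ℝ) (p : Policy) : Prop :=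
  Feasible α β Smax k N E₁ E₂ σ₁ σ₂ p.w₁ p.w₂ p.c₁ p.c₂ p.d₁ p.d₂ p.x₁₂ p.x₂₁ p.s₁ p.s₂

def cost (k N : ℕ) (p : Policy) : ℝ := ∑ t ∈ Icc k N, (p.w₁ t + p.w₂ t)

lemma _root_.Jstar_eq_sInf_cost (α β Smax : ℝ) (k N : ℕ) (E₁ E₂ : ℕ → ℝ) (σ₁ σ₂ : ℝ) :
    Jstar α β Smax k N E₁ E₂ σ₁ σ₂ =
      sInf (cost k N '' {p | p.IsFeasible α β Smax k N E₁ E₂ σ₁ σ₂}) := by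
  refine congrArg sInf (Set.ext fun r => ?_)
  constructor
  · rintro ⟨w₁, w₂, c₁, c₂, d₁, d₂, x₁₂, x₂₁, s₁, s₂, hp, rfl⟩
    exact ⟨⟨w₁, w₂, c₁, c₂, d₁, d₂, x₁₂, x₂₁, s₁, s₂⟩, hp, rfl⟩
  · rintro ⟨p, hp, rfl⟩
    exact ⟨_, _, _, _, _, _, _, _, _, _, hp, rfl⟩

variable {α β Smax : ℝ} {k N : ℕ} {E₁ E₂ : ℕ → ℝ} {σ₁ σ₂ : ℝ} {p : Policy}

lemma IsFeasible.cost_nonneg (hp : p.IsFeasible α β Smax k N E₁ E₂ σ₁ σ₂) :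
    0 ≤ p.cost k N :=
  sum_nonneg fun t ht => add_nonneg (hp.2.2.1 t ht).1 (hp.2.2.1 t ht).2.1

lemma exists_isFeasible (hσ₁ : 0 ≤ σ₁ ∧ σ₁ ≤ Smax) (hσ₂ : 0 ≤ σ₂ ∧ σ₂ ≤ Smax) :
    ∃ p : Policy, p.IsFeasible α β Smax k N E₁ E₂ σ₁ σ₂ := by
  refine ⟨⟨fun t => max 0 (-E₁ t), fun t => max 0 (-E₂ t), 0, 0, 0, 0, 0, 0,
    fun _ => σ₁, fun _ => σ₂⟩, rfl, rfl, fun t _ => ?_, fun _ _ => ⟨hσ₁.1, hσ₁.2, hσ₂.1, hσ₂.2⟩⟩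
  simp only [Pi.zero_apply, le_refl, mul_zero, add_zero, sub_zero, le_max_left, true_and]
  exact ⟨hσ₁.1, hσ₂.1, by linarith [le_max_right 0 (-E₁ t)], by linarith [le_max_right 0 (-E₂ t)]⟩

lemma IsFeasible.exists_no_roundTrip (hα : 0 ≤ α ∧ α ≤ 1)
    (hp : p.IsFeasible α β Smax k N E₁ E₂ σ₁ σ₂) :
    ∃ q : Policy, q.IsFeasible α β Smax k N E₁ E₂ σ₁ σ₂ ∧ q.cost k N = p.cost k N ∧
      ∀ t ∈ Icc k N, q.c₁ t = 0 ∨ q.d₁ t = 0 := by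
  obtain ⟨hs₁, hs₂, hslot, hbound⟩ := hp
  choose! e he using fun t (ht : t ∈ Icc k N) =>
    exists_roundTrip hα.1 (hslot t ht).2.2.1 (hslot t ht).2.2.2.2.1
  refine ⟨{ p with c₁ := fun t => p.c₁ t - e t, d₁ := fun t => p.d₁ t - α * e t },
    ⟨hs₁, hs₂, fun t ht => ?_, hbound⟩, rfl, fun t ht => ?_⟩
  · obtain ⟨he₀, hec, hed, -⟩ := he t ht
    obtain ⟨hw₁, hw₂, -, hc₂, -, hd₂, hx₁₂, hx₂₁, hstep₁, hstep₂, hds₁, hds₂, hb₁, hb₂⟩ :=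
      hslot t ht
    refine ⟨hw₁, hw₂, sub_nonneg.2 hec, hc₂, sub_nonneg.2 hed, hd₂, hx₁₂, hx₂₁, ?_, hstep₂, ?_,
      hds₂, ?_, hb₂⟩
    · dsimp only
      linarith
    · dsimp only
      linarith [mul_nonneg hα.1 he₀]
    · dsimp only
      nlinarith [mul_le_mul_of_nonneg_left hα.2 hα.1]
  · rcases (he t ht).2.2.2 with h | h
    · exact .inl (sub_eq_zero.2 h.symm)
    · exact .inr (sub_eq_zero.2 h.symm)

def gap (Δ : ℝ) (k : ℕ) (p : Policy) : ℕ → ℝ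
  | 0 => Δ
  | t + 1 => if t < k then Δ else min (p.gap Δ k t) (p.s₁ t - p.d₁ t)

variable {Δ : ℝ}

lemma gap_self : p.gap Δ k k = Δ := by
  cases k <;> simp [gap]

lemma gap_succ {t : ℕ} (ht : k ≤ t) : p.gap Δ k (t + 1) = min (p.gap Δ k t) (p.s₁ t - p.d₁ t) :=
  if_neg ht.not_gt

lemma IsFeasible.gap_mem_Icc (hα : 0 ≤ α) (hσ₁ : 0 ≤ σ₁) (hΔ : 0 ≤ Δ)
    (hp : p.IsFeasible α β Smax k N E₁ E₂ (σ₁ + Δ) σ₂) :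
    ∀ t ∈ Icc k (N + 1), p.gap Δ k t ∈ Set.Icc 0 (p.s₁ t) := by
  obtain ⟨hs₁, -, hslot, -⟩ := hp
  intro t ht
  obtain ⟨hkt, htN⟩ := mem_Icc.1 ht
  clear ht
  induction t, hkt using Nat.le_induction with
  | base => rw [gap_self, hs₁]; exact ⟨hΔ, by linarith⟩
  | succ t hkt ih =>
    obtain ⟨ih₀, ih₁⟩ := ih (by omega)
    obtain ⟨-, -, hc₁, -, -, -, -, -, hstep₁, -, hds₁, -⟩ := hslot t (mem_Icc.2 ⟨hkt, by omega⟩)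
    rw [gap_succ hkt, hstep₁]
    exact ⟨le_min ih₀ (sub_nonneg.2 hds₁),
      (min_le_right _ _).trans (by linarith [mul_nonneg hα hc₁])⟩

def withLowerStore (α β Δ : ℝ) (k : ℕ) (p : Policy) : Policy :=
  let forgone t := p.gap Δ k t - p.gap Δ k (t + 1)
  let cut t := min (p.x₁₂ t) (α * forgone t)
  { p with
    w₂ := fun t => p.w₂ t + β * cut t
    d₁ := fun t => p.d₁ t - forgone t
    x₁₂ := fun t => p.x₁₂ t - cut t
    s₁ := fun t => p.s₁ t - p.gap Δ k t }

lemma IsFeasible.cost_withLowerStore_le (hα : 0 ≤ α) (hβ : 0 ≤ β) (hkN : k ≤ N)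
    (hσ₁ : 0 ≤ σ₁) (hΔ : 0 ≤ Δ) (hp : p.IsFeasible α β Smax k N E₁ E₂ (σ₁ + Δ) σ₂) :
    (p.withLowerStore α β Δ k).cost k N ≤ p.cost k N + α * β * Δ := by
  set g := p.gap Δ k
  have hforgone : ∑ t ∈ Icc k N, (g t - g (t + 1)) = Δ - g (N + 1) := by
    have htel := sum_Icc_sub hkN g
    rw [show g k = Δ from gap_self] at htel
    rw [← neg_sub, ← htel, ← sum_neg_distrib]
    simp only [neg_sub]
  have hg₀ := (hp.gap_mem_Icc hα hσ₁ hΔ (N + 1) (mem_Icc.2 ⟨by omega, le_rfl⟩)).1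
  calc (p.withLowerStore α β Δ k).cost k N
      = p.cost k N + β * ∑ t ∈ Icc k N, min (p.x₁₂ t) (α * (g t - g (t + 1))) := by
        simp only [cost, withLowerStore, mul_sum, ← sum_add_distrib, add_assoc]
        rfl
    _ ≤ p.cost k N + β * ∑ t ∈ Icc k N, α * (g t - g (t + 1)) := by
        gcongr with t
        exact min_le_right _ _
    _ ≤ p.cost k N + α * β * Δ := by
        rw [← mul_sum, hforgone]
        linarith [mul_nonneg (mul_nonneg hα hβ) hg₀]

lemma IsFeasible.gap_succ_mem_Icc (hα : 0 ≤ α) (hσ₁ : 0 ≤ σ₁) (hΔ : 0 ≤ Δ)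
    (hp : p.IsFeasible α β Smax k N E₁ E₂ (σ₁ + Δ) σ₂) :
    ∀ t ∈ Icc k N, p.gap Δ k (t + 1) ∈
      Set.Icc (p.gap Δ k t - p.d₁ t) (min (p.gap Δ k t) (p.s₁ t - p.d₁ t)) := by
  intro t ht
  obtain ⟨hkt, htN⟩ := mem_Icc.1 ht
  obtain ⟨-, hgs⟩ := hp.gap_mem_Icc hα hσ₁ hΔ t (mem_Icc.2 ⟨hkt, by omega⟩)
  obtain ⟨-, -, -, -, hd₁, -, -, -, -, -, hds₁, -⟩ := hp.2.2.1 t ht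
  rw [gap_succ hkt]
  exact ⟨le_min (by linarith) (by linarith), le_rfl⟩

lemma IsFeasible.withLowerStore (hα : 0 ≤ α) (hβ : 0 ≤ β) (hE₁ : ∀ t ∈ Icc k N, 0 ≤ E₁ t)
    (hσ₁ : 0 ≤ σ₁) (hΔ : 0 ≤ Δ) (hp : p.IsFeasible α β Smax k N E₁ E₂ (σ₁ + Δ) σ₂)
    (hsep : ∀ t ∈ Icc k N, p.c₁ t = 0 ∨ p.d₁ t = 0) :
    (p.withLowerStore α β Δ k).IsFeasible α β Smax k N E₁ E₂ σ₁ σ₂ := by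
  have hg := hp.gap_mem_Icc hα hσ₁ hΔ
  have hg_succ := hp.gap_succ_mem_Icc hα hσ₁ hΔ
  obtain ⟨hs₁, hs₂, hslot, hbound⟩ := hp
  refine ⟨show p.s₁ k - p.gap Δ k k = σ₁ by rw [gap_self, hs₁]; ring, hs₂, fun t ht => ?_,
    fun t ht => ?_⟩
  · obtain ⟨hw₁, hw₂, hc₁, hc₂, hd₁, hd₂, hx₁₂, hx₂₁, hstep₁, hstep₂, hds₁, hds₂, hb₁, hb₂⟩ :=
      hslot t ht
    obtain ⟨hlo, hhi⟩ := hg_succ t ht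
    obtain ⟨hδ₀, hg's⟩ := le_min_iff.1 hhi
    set g := p.gap Δ k t
    set g' := p.gap Δ k (t + 1)
    set z := min (p.x₁₂ t) (α * (g - g'))
    have hz₀ : 0 ≤ z := le_min hx₁₂ (mul_nonneg hα (sub_nonneg.2 hδ₀))
    refine ⟨hw₁, add_nonneg hw₂ (mul_nonneg hβ hz₀), hc₁, hc₂, sub_nonneg.2 (by linarith), hd₂,
      sub_nonneg.2 (min_le_left _ _), hx₂₁, ?_, hstep₂, ?_, hds₂, ?_, ?_⟩
    · show p.s₁ (t + 1) - g' = p.s₁ t - g + α * p.c₁ t - (p.d₁ t - (g - g'))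
      linarith
    · show p.d₁ t - (g - g') ≤ p.s₁ t - g
      linarith
    · show 0 ≤ E₁ t + p.w₁ t - p.c₁ t + α * (p.d₁ t - (g - g')) - (p.x₁₂ t - z) + β * p.x₂₁ t
      rcases le_total (α * (g - g')) (p.x₁₂ t) with h | h
      · have hz : z = α * (g - g') := min_eq_right h
        linarith
      · have hz : z = p.x₁₂ t := min_eq_left h
        rcases hsep t ht with hc | hd
        · linarith [hE₁ t ht, mul_nonneg hα (by linarith : 0 ≤ p.d₁ t - (g - g')),
            mul_nonneg hβ hx₂₁]
        · have hδ : g - g' = 0 := by linarith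
          rw [hδ] at h ⊢
          linarith
    · show 0 ≤ E₂ t + (p.w₂ t + β * z) - p.c₂ t + α * p.d₂ t - p.x₂₁ t + β * (p.x₁₂ t - z)
      linarith
  · obtain ⟨hg₀, hgs⟩ := hg t ht
    obtain ⟨-, hs₁max, hs₂₀, hs₂max⟩ := hbound t ht
    refine ⟨sub_nonneg.2 hgs, ?_, hs₂₀, hs₂max⟩
    show p.s₁ t - p.gap Δ k t ≤ Smax
    linarith

end Policy

open Policy in
theorem sharpened_storage_bound_surplus_general
    (α β Smax : ℝ) (hα : 0 ≤ α ∧ α ≤ 1) (hβ : 0 ≤ β ∧ β ≤ 1)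
    (k N : ℕ) (hkN : k ≤ N) (E₁ E₂ : ℕ → ℝ)
    (hE₁ : ∀ t ∈ Finset.Icc k N, 0 ≤ E₁ t)
    (σ₁ σ₂ : ℝ) (hσ₁ : 0 ≤ σ₁ ∧ σ₁ ≤ Smax) (hσ₂ : 0 ≤ σ₂ ∧ σ₂ ≤ Smax)
    (Δ : ℝ) (hΔ : 0 ≤ Δ) (hcap : σ₁ + Δ ≤ Smax) :
    Jstar α β Smax k N E₁ E₂ σ₁ σ₂ ≤
      Jstar α β Smax k N E₁ E₂ (σ₁ + Δ) σ₂ + α * β * Δ := by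
  rw [Jstar_eq_sInf_cost, Jstar_eq_sInf_cost]
  refine csInf_le_csInf_add ⟨0, ?_⟩
    (Set.Nonempty.image _ (exists_isFeasible ⟨add_nonneg hσ₁.1 hΔ, hcap⟩ hσ₂)) ?_
  · rintro _ ⟨p, hp, rfl⟩
    exact hp.cost_nonneg
  · rintro _ ⟨p, hp, rfl⟩
    obtain ⟨q, hq, hq_cost, hsep⟩ := hp.exists_no_roundTrip hα
    refine ⟨_, ⟨_, hq.withLowerStore hα.1 hβ.1 hE₁ hσ₁.1 hΔ hsep, rfl⟩, ?_⟩
    rw [← hq_cost]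
    exact hq.cost_withLowerStore_le hα.1 hβ.1 hkN hσ₁.1 hΔ

/-- Claim 1: sharpened storage bound when BS 1 always has a surplus. -/
theorem sharpened_storage_bound_surplus
    (α β Smax : ℝ) (hα : 0 ≤ α ∧ α ≤ 1) (hβ : 0 ≤ β ∧ β ≤ 1) (hS : 0 < Smax)
    (k N : ℕ) (hkN : k ≤ N) (E₁ E₂ : ℕ → ℝ)
    (hE₁ : ∀ t ∈ Finset.Icc k N, 0 ≤ E₁ t)
    (σ₁ σ₂ : ℝ) (hσ₁ : 0 ≤ σ₁ ∧ σ₁ ≤ Smax) (hσ₂ : 0 ≤ σ₂ ∧ σ₂ ≤ Smax)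
    (Δ : ℝ) (hΔ : 0 ≤ Δ) (hcap : σ₁ + Δ ≤ Smax) :
    Jstar α β Smax k N E₁ E₂ σ₁ σ₂ ≤
      Jstar α β Smax k N E₁ E₂ (σ₁ + Δ) σ₂ + α * β * Δ :=
  sharpened_storage_bound_surplus_general α β Smax hα hβ k N hkN E₁ E₂ hE₁ σ₁ σ₂ hσ₁ hσ₂ Δ hΔ hcap
end

section
/- (It is optimal to compensate a local deficit from local storage rather than from the other base station's storage.) Suppose 0 < α ≤ 1, 0 < β ≤ 1, and Δ ≥ 0 with Δ ≤ min{α·σ₁, α·β·σ₂}. Then J*_k(σ₁ − Δ/α, σ₂) ≤ J*_k(σ₁, σ₂ − Δ/(α·β)). -/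
open Finset

noncomputable section

def achievableCosts (α β Smax : ℝ) (k N : ℕ) (E₁ E₂ : ℕ → ℝ) (σ₁ σ₂ : ℝ) : Set ℝ :=
  {r : ℝ | ∃ w₁ w₂ c₁ c₂ d₁ d₂ x₁₂ x₂₁ s₁ s₂ : ℕ → ℝ,
    Feasible α β Smax k N E₁ E₂ σ₁ σ₂ w₁ w₂ c₁ c₂ d₁ d₂ x₁₂ x₂₁ s₁ s₂ ∧
    (∑ t ∈ Finset.Icc k N, (w₁ t + w₂ t)) = r}

def SlotFeasible (α β : ℝ) (E₁ E₂ w₁ w₂ c₁ c₂ d₁ d₂ x₁₂ x₂₁ s₁ s₂ : ℕ → ℝ) (t : ℕ) : Prop :=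
  0 ≤ w₁ t ∧ 0 ≤ w₂ t ∧ 0 ≤ c₁ t ∧ 0 ≤ c₂ t ∧ 0 ≤ d₁ t ∧ 0 ≤ d₂ t ∧
    0 ≤ x₁₂ t ∧ 0 ≤ x₂₁ t ∧
    s₁ (t + 1) = s₁ t + α * c₁ t - d₁ t ∧
    s₂ (t + 1) = s₂ t + α * c₂ t - d₂ t ∧
    d₁ t ≤ s₁ t ∧ d₂ t ≤ s₂ t ∧
    0 ≤ E₁ t + w₁ t - c₁ t + α * d₁ t - x₁₂ t + β * x₂₁ t ∧
    0 ≤ E₂ t + w₂ t - c₂ t + α * d₂ t - x₂₁ t + β * x₁₂ t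

def shortfall (D d s : ℝ) : ℝ := max 0 (d - (s - D))

/-- Only the values from slot `k` on matter; before `k` the debt is held at `D₀`. -/
def debt (β Smax D₀ : ℝ) (k : ℕ) (d₁ s₁ s₂ : ℕ → ℝ) : ℕ → ℝ
  | 0 => D₀
  | t + 1 =>
    if t < k then D₀
    else
      min (debt β Smax D₀ k d₁ s₁ s₂ t - shortfall (debt β Smax D₀ k d₁ s₁ s₂ t) (d₁ t) (s₁ t))
        (β * (Smax - s₂ (t + 1)))

end

section Replay

variable {α β Smax D₀ σ₁ σ₂ : ℝ} {k N : ℕ}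
  {E₁ E₂ w₁ w₂ c₁ c₂ d₁ d₂ x₁₂ x₂₁ s₁ s₂ : ℕ → ℝ}

theorem achievableCosts_bddBelow : BddBelow (achievableCosts α β Smax k N E₁ E₂ σ₁ σ₂) := by
  refine ⟨0, ?_⟩
  rintro r ⟨w₁, w₂, c₁, c₂, d₁, d₂, x₁₂, x₂₁, s₁, s₂, ⟨-, -, hslot, -⟩, rfl⟩
  exact sum_nonneg fun t ht => add_nonneg (hslot t ht).1 (hslot t ht).2.1

/-- The idle policy: no storage use, no transfer, every deficit bought from the grid. -/
theorem achievableCosts_nonempty (hσ₁ : 0 ≤ σ₁ ∧ σ₁ ≤ Smax) (hσ₂ : 0 ≤ σ₂ ∧ σ₂ ≤ Smax) :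
    (achievableCosts α β Smax k N E₁ E₂ σ₁ σ₂).Nonempty := by
  refine ⟨_, fun t => max 0 (-E₁ t), fun t => max 0 (-E₂ t), 0, 0, 0, 0, 0, 0,
    fun _ => σ₁, fun _ => σ₂, ⟨rfl, rfl, fun t _ => ?_, fun _ _ => ⟨hσ₁.1, hσ₁.2, hσ₂⟩⟩, rfl⟩
  simp only [Pi.zero_apply, mul_zero, sub_zero, add_zero, le_refl, true_and, hσ₁.1, hσ₂.1,
    le_max_left]
  exact ⟨by linarith [le_max_right 0 (-E₁ t)], by linarith [le_max_right 0 (-E₂ t)]⟩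

theorem Jstar_le_Jstar_of_achievableCosts_subset {τ₁ τ₂ : ℝ}
    (hne : (achievableCosts α β Smax k N E₁ E₂ τ₁ τ₂).Nonempty)
    (h : achievableCosts α β Smax k N E₁ E₂ τ₁ τ₂ ⊆ achievableCosts α β Smax k N E₁ E₂ σ₁ σ₂) :
    Jstar α β Smax k N E₁ E₂ σ₁ σ₂ ≤ Jstar α β Smax k N E₁ E₂ τ₁ τ₂ :=
  csInf_le_csInf achievableCosts_bddBelow hne h

theorem shortfall_nonneg (D d s : ℝ) : 0 ≤ shortfall D d s := le_max_left _ _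

theorem sub_sub_le_shortfall (D d s : ℝ) : d - (s - D) ≤ shortfall D d s := le_max_right _ _

theorem shortfall_le_left {D d s : ℝ} (hD : 0 ≤ D) (hds : d ≤ s) : shortfall D d s ≤ D :=
  max_le hD (by linarith)

theorem shortfall_le {D d s : ℝ} (hd : 0 ≤ d) (hDs : D ≤ s) : shortfall D d s ≤ d :=
  max_le hd (by linarith)

theorem debt_self : debt β Smax D₀ k d₁ s₁ s₂ k = D₀ := by
  cases k <;> simp [debt]

theorem debt_succ {t : ℕ} (ht : k ≤ t) :
    debt β Smax D₀ k d₁ s₁ s₂ (t + 1) =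
      min (debt β Smax D₀ k d₁ s₁ s₂ t -
          shortfall (debt β Smax D₀ k d₁ s₁ s₂ t) (d₁ t) (s₁ t))
        (β * (Smax - s₂ (t + 1))) := by
  simp [debt, not_lt.2 ht]

theorem debt_invariant (hα : 0 ≤ α) (hβ : 0 ≤ β) (hD₀ : 0 ≤ D₀) (hD₀₁ : D₀ ≤ σ₁)
    (hD₀₂ : D₀ ≤ β * (Smax - σ₂))
    (h : Feasible α β Smax k N E₁ E₂ σ₁ σ₂ w₁ w₂ c₁ c₂ d₁ d₂ x₁₂ x₂₁ s₁ s₂) :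
    ∀ t ∈ Icc k (N + 1), 0 ≤ debt β Smax D₀ k d₁ s₁ s₂ t ∧
      debt β Smax D₀ k d₁ s₁ s₂ t ≤ s₁ t ∧ debt β Smax D₀ k d₁ s₁ s₂ t ≤ β * (Smax - s₂ t) := by
  obtain ⟨hs₁k, hs₂k, hslot, hrange⟩ := h
  intro t ht
  obtain ⟨hkt, htN⟩ := mem_Icc.1 ht
  induction t, hkt using Nat.le_induction with
  | base => rw [debt_self]; exact ⟨hD₀, hs₁k ▸ hD₀₁, hs₂k ▸ hD₀₂⟩
  | succ t hkt ih =>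
    obtain ⟨hD, hD₁, -⟩ := ih (mem_Icc.2 ⟨hkt, by omega⟩) (by omega)
    obtain ⟨-, -, hc₁, -, -, -, -, -, hs₁, -, hd₁s, -⟩ := hslot t (mem_Icc.2 ⟨hkt, by omega⟩)
    have hs₂' : s₂ (t + 1) ≤ Smax := (hrange (t + 1) ht).2.2.2
    rw [debt_succ hkt]
    set D := debt β Smax D₀ k d₁ s₁ s₂ t
    refine ⟨le_min (by linarith [shortfall_le_left hD hd₁s]) (mul_nonneg hβ (by linarith)),
      ?_, min_le_right _ _⟩
    calc min (D - shortfall D (d₁ t) (s₁ t)) (β * (Smax - s₂ (t + 1)))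
        _ ≤ D - shortfall D (d₁ t) (s₁ t) := min_le_left _ _
        _ ≤ s₁ t - d₁ t := by linarith [sub_sub_le_shortfall D (d₁ t) (s₁ t)]
        _ ≤ s₁ (t + 1) := by rw [hs₁]; nlinarith

theorem SlotFeasible.replay {D ℓ X : ℕ → ℝ} {t : ℕ} (hα : 0 < α) (hβ : 0 < β)
    (h : SlotFeasible α β E₁ E₂ w₁ w₂ c₁ c₂ d₁ d₂ x₁₂ x₂₁ s₁ s₂ t)
    (hD : 0 ≤ D t) (hD₁ : D t ≤ s₁ t) (hD₂ : D t ≤ β * (Smax - s₂ t))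
    (hℓ : ℓ t = shortfall (D t) (d₁ t) (s₁ t))
    (hD' : D (t + 1) = min (D t - ℓ t) (β * (Smax - s₂ (t + 1))))
    (hX : X t = D t - ℓ t - D (t + 1)) :
    SlotFeasible α β E₁ E₂ w₁ w₂ (fun t => c₁ t + X t / α) (fun t => c₂ t - X t / (α * β))
      (fun t => d₁ t - ℓ t) (fun t => d₂ t + ℓ t / β) x₁₂
      (fun t => x₂₁ t + α * ℓ t / β + X t / (α * β)) (fun t => s₁ t - D t)
      (fun t => s₂ t + D t / β) t := by
  obtain ⟨hw₁, hw₂, hc₁, hc₂, hd₁, hd₂, hx₁₂, hx₂₁, hs₁, hs₂, hd₁s, hd₂s, hb₁, hb₂⟩ := h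
  have hℓ0 : 0 ≤ ℓ t := hℓ ▸ shortfall_nonneg _ _ _
  have hℓD : ℓ t ≤ D t := hℓ ▸ shortfall_le_left hD hd₁s
  have hℓd₁ : ℓ t ≤ d₁ t := hℓ ▸ shortfall_le hd₁ hD₁
  have hℓs₁ : d₁ t - (s₁ t - D t) ≤ ℓ t := hℓ ▸ sub_sub_le_shortfall _ _ _
  have hX0 : 0 ≤ X t := by linarith [hD' ▸ min_le_left (D t - ℓ t) (β * (Smax - s₂ (t + 1)))]
  have hαβ : 0 < α * β := mul_pos hα hβ
  have hXc₂ : X t ≤ α * β * c₂ t := by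
    have : D t - ℓ t - α * β * c₂ t ≤ D (t + 1) := by
      rw [hD', hs₂]
      exact le_min (by nlinarith) (by nlinarith)
    linarith
  refine ⟨hw₁, hw₂, ?_, ?_, ?_, ?_, hx₁₂, ?_, ?_, ?_, ?_, ?_, ?_, ?_⟩
  · have := div_nonneg hX0 hα.le; simp only; linarith
  · have := (div_le_iff₀ hαβ).2 (by linarith : X t ≤ c₂ t * (α * β)); simp only; linarith
  · simp only; linarith
  · have := div_nonneg hℓ0 hβ.le; simp only; linarith
  · have := div_nonneg (mul_nonneg hα.le hℓ0) hβ.le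
    have := div_nonneg hX0 hαβ.le
    simp only; linarith
  · simp only; rw [hs₁, hX]; field_simp; ring
  · simp only; rw [hs₂, hX]; field_simp; ring
  · simp only; linarith
  · have := div_le_div_of_nonneg_right hℓD hβ.le; simp only; linarith
  · convert hb₁ using 1; field_simp; ring
  · convert hb₂ using 1; field_simp; ring

theorem Feasible.replay (hα : 0 < α) (hβ : 0 < β) (hD₀ : 0 ≤ D₀) (hD₀₁ : D₀ ≤ σ₁)
    (hD₀₂ : D₀ ≤ β * (Smax - σ₂))
    (h : Feasible α β Smax k N E₁ E₂ σ₁ σ₂ w₁ w₂ c₁ c₂ d₁ d₂ x₁₂ x₂₁ s₁ s₂) :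
    ∃ c₁' c₂' d₁' d₂' x₂₁' s₁' s₂' : ℕ → ℝ,
      Feasible α β Smax k N E₁ E₂ (σ₁ - D₀) (σ₂ + D₀ / β) w₁ w₂ c₁' c₂' d₁' d₂' x₁₂ x₂₁' s₁' s₂' := by
  have hinv := debt_invariant hα.le hβ.le hD₀ hD₀₁ hD₀₂ h
  obtain ⟨hs₁k, hs₂k, hslot, hrange⟩ := h
  set D := debt β Smax D₀ k d₁ s₁ s₂
  set ℓ := fun t => shortfall (D t) (d₁ t) (s₁ t)
  set X := fun t => D t - ℓ t - D (t + 1)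
  refine ⟨fun t => c₁ t + X t / α, fun t => c₂ t - X t / (α * β), fun t => d₁ t - ℓ t,
    fun t => d₂ t + ℓ t / β, fun t => x₂₁ t + α * ℓ t / β + X t / (α * β), fun t => s₁ t - D t,
    fun t => s₂ t + D t / β, ?_, ?_, fun t ht => ?_, fun t ht => ?_⟩
  · simp only [D, hs₁k, debt_self]
  · simp only [D, hs₂k, debt_self]
  · obtain ⟨hkt, htN⟩ := mem_Icc.1 ht
    obtain ⟨hD, hD₁, hD₂⟩ := hinv t (mem_Icc.2 ⟨hkt, by omega⟩)
    exact SlotFeasible.replay (ℓ := ℓ) (X := X) hα hβ (hslot t ht) hD hD₁ hD₂ rfl (debt_succ hkt) rfl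
  · obtain ⟨hD, hD₁, hD₂⟩ := hinv t ht
    obtain ⟨hs₁0, hs₁le, hs₂0, hs₂le⟩ := hrange t ht
    have hDβ : D t / β ≤ Smax - s₂ t := (div_le_iff₀' hβ).2 hD₂
    have := div_nonneg hD hβ.le
    exact ⟨by linarith, by linarith, by linarith, by linarith⟩

theorem achievableCosts_subset_replay (hα : 0 < α) (hβ : 0 < β) (hD₀ : 0 ≤ D₀)
    (hD₀₁ : D₀ ≤ σ₁) (hD₀₂ : D₀ ≤ β * (Smax - σ₂)) :
    achievableCosts α β Smax k N E₁ E₂ σ₁ σ₂ ⊆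
      achievableCosts α β Smax k N E₁ E₂ (σ₁ - D₀) (σ₂ + D₀ / β) := by
  rintro r ⟨w₁, w₂, c₁, c₂, d₁, d₂, x₁₂, x₂₁, s₁, s₂, h, rfl⟩
  obtain ⟨c₁', c₂', d₁', d₂', x₂₁', s₁', s₂', h'⟩ := h.replay hα hβ hD₀ hD₀₁ hD₀₂
  exact ⟨w₁, w₂, c₁', c₂', d₁', d₂', x₁₂, x₂₁', s₁', s₂', h', rfl⟩

end Replay

theorem compensate_locally_better_general
    (α β Smax : ℝ) (hα : 0 < α ∧ α ≤ 1) (hβ : 0 < β ∧ β ≤ 1)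
    (k N : ℕ) (E₁ E₂ : ℕ → ℝ)
    (σ₁ σ₂ : ℝ) (hσ₁ : 0 ≤ σ₁ ∧ σ₁ ≤ Smax) (hσ₂ : 0 ≤ σ₂ ∧ σ₂ ≤ Smax)
    (Δ : ℝ) (hΔ : 0 ≤ Δ) (hΔle : Δ ≤ min (α * σ₁) (α * β * σ₂)) :
    Jstar α β Smax k N E₁ E₂ (σ₁ - Δ / α) σ₂ ≤
      Jstar α β Smax k N E₁ E₂ σ₁ (σ₂ - Δ / (α * β)) := by
  have hαβ : 0 < α * β := mul_pos hα.1 hβ.1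
  have hD₀₁ : Δ / α ≤ σ₁ := (div_le_iff₀' hα.1).2 (hΔle.trans (min_le_left _ _))
  have hσ₂' : Δ / (α * β) ≤ σ₂ := (div_le_iff₀' hαβ).2 (hΔle.trans (min_le_right _ _))
  have hβΔ : β * (Δ / (α * β)) = Δ / α := by
    rw [mul_div_assoc', mul_comm α β, mul_div_mul_left _ _ hβ.1.ne']
  have hD₀₂ : Δ / α ≤ β * (Smax - (σ₂ - Δ / (α * β))) := by
    rw [sub_sub_eq_add_sub, add_sub_right_comm, mul_add, hβΔ]
    linarith [mul_nonneg hβ.1.le (sub_nonneg.2 hσ₂.2)]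
  have hsubset := achievableCosts_subset_replay (E₁ := E₁) (E₂ := E₂) (k := k) (N := N)
    hα.1 hβ.1 (div_nonneg hΔ hα.1.le) hD₀₁ hD₀₂
  rw [div_div, sub_add_cancel] at hsubset
  exact Jstar_le_Jstar_of_achievableCosts_subset
    (achievableCosts_nonempty hσ₁ ⟨by linarith, by linarith [div_nonneg hΔ hαβ.le]⟩) hsubset

/-- Proposition 3, Case 2: compensating a local deficit from local
storage is at least as good as using the other base station's storage. -/
theorem compensate_locally_better
    (α β Smax : ℝ) (hα : 0 < α ∧ α ≤ 1) (hβ : 0 < β ∧ β ≤ 1) (hS : 0 < Smax)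
    (k N : ℕ) (hkN : k ≤ N) (E₁ E₂ : ℕ → ℝ)
    (σ₁ σ₂ : ℝ) (hσ₁ : 0 ≤ σ₁ ∧ σ₁ ≤ Smax) (hσ₂ : 0 ≤ σ₂ ∧ σ₂ ≤ Smax)
    (Δ : ℝ) (hΔ : 0 ≤ Δ) (hΔle : Δ ≤ min (α * σ₁) (α * β * σ₂)) :
    Jstar α β Smax k N E₁ E₂ (σ₁ - Δ / α) σ₂ ≤
      Jstar α β Smax k N E₁ E₂ σ₁ (σ₂ - Δ / (α * β)) :=
  compensate_locally_better_general α β Smax hα hβ k N E₁ E₂ σ₁ σ₂ hσ₁ hσ₂ Δ hΔ hΔle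
end

section
/- (Energy transfer is always optimal when β > α.) Suppose 0 < α < β ≤ 1 and E₁(k) > 0 > E₂(k). Let Δ = min{−E₂(k)/β, E₁(k)}, and define modified profiles E₁', E₂' by E₁'(k) = E₁(k) − Δ, E₂'(k) = E₂(k) + β·Δ, and E_i'(t) = E_i(t) for all t ∈ {k+1,…,N}. Then for every initial state (σ₁,σ₂) ∈ [0,S_max]², the optimal cost for the modified profiles is at most the optimal cost for the original profiles: J*_k(σ₁,σ₂; E₁', E₂') ≤ J*_k(σ₁,σ₂; E₁, E₂). (That is, transferring Δ units of energy from BS 1 to BS 2 at time k, of which β·Δ arrives, can be assumed to be part of an optimal policy.) -/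
/-!
Take any feasible policy for `(E₁, E₂)`. Under `(E₁', E₂')`, BS 1 covers its loss of `Δ` at slot
`k` by sending less to BS 2, charging less, or wasting less, and BS 2 spends the `β Δ` it gains on
discharging less or drawing less from the grid. From then on BS 1's storage may lag behind the
original trajectory while BS 2's is ahead of it, and the grid savings of slot `k` form a budget.
Whenever BS 1 would discharge energy it no longer has, BS 2 discharges its surplus and sends it
over, and the budget pays for the rest; whenever BS 2's surplus would overflow, BS 2 charges less
and sends the excess to BS 1, which stores it. A unit withheld from BS 1's storage at slot `k` is
worth `α²` units at BS 1 later, while the same unit moved to BS 2's storage is worth `β² ≥ α²`,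
so the budget never runs out.
-/

namespace EnergyCooperation

open Finset Function

structure Action where
  w₁ : ℝ
  w₂ : ℝ
  c₁ : ℝ
  c₂ : ℝ
  d₁ : ℝ
  d₂ : ℝ
  x₁₂ : ℝ
  x₂₁ : ℝ

def SlotFeasible (α β e₁ e₂ : ℝ) (a : Action) (s₁ s₂ s₁' s₂' : ℝ) : Prop :=
  0 ≤ a.w₁ ∧ 0 ≤ a.w₂ ∧ 0 ≤ a.c₁ ∧ 0 ≤ a.c₂ ∧ 0 ≤ a.d₁ ∧ 0 ≤ a.d₂ ∧ 0 ≤ a.x₁₂ ∧ 0 ≤ a.x₂₁ ∧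
    s₁' = s₁ + α * a.c₁ - a.d₁ ∧ s₂' = s₂ + α * a.c₂ - a.d₂ ∧ a.d₁ ≤ s₁ ∧ a.d₂ ≤ s₂ ∧
    0 ≤ e₁ + a.w₁ - a.c₁ + α * a.d₁ - a.x₁₂ + β * a.x₂₁ ∧
    0 ≤ e₂ + a.w₂ - a.c₂ + α * a.d₂ - a.x₂₁ + β * a.x₁₂

def InBounds (Smax s₁ s₂ : ℝ) : Prop := 0 ≤ s₁ ∧ s₁ ≤ Smax ∧ 0 ≤ s₂ ∧ s₂ ≤ Smax

def costSet (α β Smax : ℝ) (k N : ℕ) (E₁ E₂ : ℕ → ℝ) (σ₁ σ₂ : ℝ) : Set ℝ :=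
  {r | ∃ w₁ w₂ c₁ c₂ d₁ d₂ x₁₂ x₂₁ s₁ s₂ : ℕ → ℝ,
    Feasible α β Smax k N E₁ E₂ σ₁ σ₂ w₁ w₂ c₁ c₂ d₁ d₂ x₁₂ x₂₁ s₁ s₂ ∧
    ∑ t ∈ Icc k N, (w₁ t + w₂ t) = r}

section costSet

variable {α β Smax : ℝ} {k N : ℕ} {E₁ E₂ : ℕ → ℝ} {σ₁ σ₂ r : ℝ}

theorem feasible_iff {w₁ w₂ c₁ c₂ d₁ d₂ x₁₂ x₂₁ s₁ s₂ : ℕ → ℝ} :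
    Feasible α β Smax k N E₁ E₂ σ₁ σ₂ w₁ w₂ c₁ c₂ d₁ d₂ x₁₂ x₂₁ s₁ s₂ ↔
      s₁ k = σ₁ ∧ s₂ k = σ₂ ∧
      (∀ t ∈ Icc k N, SlotFeasible α β (E₁ t) (E₂ t)
        ⟨w₁ t, w₂ t, c₁ t, c₂ t, d₁ t, d₂ t, x₁₂ t, x₂₁ t⟩ (s₁ t) (s₂ t) (s₁ (t + 1)) (s₂ (t + 1))) ∧
      ∀ t ∈ Icc k (N + 1), InBounds Smax (s₁ t) (s₂ t) :=
  Iff.rfl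

theorem inBounds_of_mem_costSet (hk : k ≤ N + 1) (hr : r ∈ costSet α β Smax k N E₁ E₂ σ₁ σ₂) :
    InBounds Smax σ₁ σ₂ := by
  obtain ⟨_, _, _, _, _, _, _, _, s₁, s₂, ⟨rfl, rfl, -, hbd⟩, -⟩ := hr
  exact hbd k (left_mem_Icc.2 hk)

theorem eq_zero_of_mem_costSet_succ (hr : r ∈ costSet α β Smax (N + 1) N E₁ E₂ σ₁ σ₂) :
    r = 0 := by
  obtain ⟨_, _, _, _, _, _, _, _, _, _, -, rfl⟩ := hr
  simp

theorem zero_mem_costSet_succ (hσ : InBounds Smax σ₁ σ₂) :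
    0 ∈ costSet α β Smax (N + 1) N E₁ E₂ σ₁ σ₂ :=
  ⟨0, 0, 0, 0, 0, 0, 0, 0, fun _ => σ₁, fun _ => σ₂,
    ⟨rfl, rfl, by simp, fun _ _ => hσ⟩, by simp⟩

theorem costSet_nonempty (hσ : InBounds Smax σ₁ σ₂) :
    (costSet α β Smax k N E₁ E₂ σ₁ σ₂).Nonempty := by
  refine ⟨_, fun t => max 0 (-E₁ t), fun t => max 0 (-E₂ t), 0, 0, 0, 0, 0, 0,
    fun _ => σ₁, fun _ => σ₂, ⟨rfl, rfl, fun t _ => ?_, fun _ _ => hσ⟩, rfl⟩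
  simp only [Pi.zero_apply, mul_zero, le_refl, true_and, sub_zero, add_zero]
  exact ⟨le_max_left _ _, le_max_left _ _, hσ.1, hσ.2.2.1, by linarith [le_max_right 0 (-E₁ t)],
    by linarith [le_max_right 0 (-E₂ t)]⟩

theorem costSet_bddBelow : BddBelow (costSet α β Smax k N E₁ E₂ σ₁ σ₂) := by
  refine ⟨0, ?_⟩
  rintro _ ⟨_, _, _, _, _, _, _, _, _, _, ⟨-, -, hslot, -⟩, rfl⟩
  exact sum_nonneg fun t ht => add_nonneg (hslot t ht).1 (hslot t ht).2.1

theorem costSet_congr {E₁' E₂' : ℕ → ℝ} (h₁ : Set.EqOn E₁ E₁' (Icc k N))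
    (h₂ : Set.EqOn E₂ E₂' (Icc k N)) :
    costSet α β Smax k N E₁ E₂ σ₁ σ₂ = costSet α β Smax k N E₁' E₂' σ₁ σ₂ := by
  have key : ∀ w₁ w₂ c₁ c₂ d₁ d₂ x₁₂ x₂₁ s₁ s₂ : ℕ → ℝ,
      Feasible α β Smax k N E₁ E₂ σ₁ σ₂ w₁ w₂ c₁ c₂ d₁ d₂ x₁₂ x₂₁ s₁ s₂ ↔
        Feasible α β Smax k N E₁' E₂' σ₁ σ₂ w₁ w₂ c₁ c₂ d₁ d₂ x₁₂ x₂₁ s₁ s₂ := by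
    intros
    simp only [feasible_iff]
    rw [forall₂_congr fun t ht => by rw [h₁ ht, h₂ ht]]
  simp only [costSet, key]

theorem exists_of_mem_costSet (hkN : k ≤ N) (hr : r ∈ costSet α β Smax k N E₁ E₂ σ₁ σ₂) :
    ∃ (a : Action) (s₁' s₂' r' : ℝ), SlotFeasible α β (E₁ k) (E₂ k) a σ₁ σ₂ s₁' s₂' ∧
      r' ∈ costSet α β Smax (k + 1) N E₁ E₂ s₁' s₂' ∧ r = a.w₁ + a.w₂ + r' := by
  obtain ⟨w₁, w₂, c₁, c₂, d₁, d₂, x₁₂, x₂₁, s₁, s₂, ⟨rfl, rfl, hslot, hbd⟩, rfl⟩ := hr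
  refine ⟨⟨w₁ k, w₂ k, c₁ k, c₂ k, d₁ k, d₂ k, x₁₂ k, x₂₁ k⟩, _, _, _,
    hslot k (left_mem_Icc.2 hkN),
    ⟨w₁, w₂, c₁, c₂, d₁, d₂, x₁₂, x₂₁, s₁, s₂, ⟨rfl, rfl, fun t ht => hslot t ?_,
      fun t ht => hbd t ?_⟩, rfl⟩, ?_⟩
  · exact Icc_subset_Icc_left k.le_succ ht
  · exact Icc_subset_Icc_left k.le_succ ht
  · rw [← add_sum_Ioc_eq_sum_Icc hkN, ← Icc_add_one_left_eq_Ioc, add_assoc]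

theorem add_mem_costSet {a : Action} {σ₁' σ₂' : ℝ} (hkN : k ≤ N) (hσ : InBounds Smax σ₁ σ₂)
    (ha : SlotFeasible α β (E₁ k) (E₂ k) a σ₁ σ₂ σ₁' σ₂')
    (hr : r ∈ costSet α β Smax (k + 1) N E₁ E₂ σ₁' σ₂') :
    a.w₁ + a.w₂ + r ∈ costSet α β Smax k N E₁ E₂ σ₁ σ₂ := by
  obtain ⟨w₁, w₂, c₁, c₂, d₁, d₂, x₁₂, x₂₁, s₁, s₂, ⟨rfl, rfl, hslot, hbd⟩, rfl⟩ := hr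
  have hIcc : ∀ {t M}, t ∈ Icc k M → t ≠ k → k + 1 ≤ t ∧ t ≤ M := fun ht htk => by
    rw [mem_Icc] at ht; omega
  refine ⟨update w₁ k a.w₁, update w₂ k a.w₂, update c₁ k a.c₁, update c₂ k a.c₂,
    update d₁ k a.d₁, update d₂ k a.d₂, update x₁₂ k a.x₁₂, update x₂₁ k a.x₂₁,
    update s₁ k σ₁, update s₂ k σ₂,
    feasible_iff.2 ⟨by simp, by simp, fun t ht => ?_, fun t ht => ?_⟩, ?_⟩
  · rcases eq_or_ne t k with rfl | htk
    · simp only [update_self, update_of_ne t.succ_ne_self]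
      exact ha
    · have ht' := hIcc ht htk
      simp only [update_of_ne htk, update_of_ne (show t + 1 ≠ k by omega)]
      exact hslot t (mem_Icc.2 ht')
  · rcases eq_or_ne t k with rfl | htk
    · simpa using hσ
    · simp only [update_of_ne htk]
      exact hbd t (mem_Icc.2 (hIcc ht htk))
  · rw [← add_sum_Ioc_eq_sum_Icc hkN, ← Icc_add_one_left_eq_Ioc]
    simp only [update_self]
    congr 1
    refine sum_congr rfl fun t ht => ?_
    have htk : t ≠ k := by rw [mem_Icc] at ht; omega
    simp [htk]

end costSet

/-- The storage state `(S₁, S₂)` with grid budget `B` can imitate the state `(s₁, s₂)`: BS 1 may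
lag behind, as long as what the lag would yield when discharged is covered by BS 2's surplus,
discharged and transferred, plus the budget. -/
def Covers (α β Smax s₁ s₂ S₁ S₂ B : ℝ) : Prop :=
  0 ≤ S₁ ∧ S₁ ≤ s₁ ∧ s₂ ≤ S₂ ∧ S₂ ≤ Smax ∧ 0 ≤ B ∧ α * (s₁ - S₁) ≤ α * β * (S₂ - s₂) + B

section slot

variable {α β Smax e₁ e₂ s₁ s₂ s₁' s₂' S₁ S₂ B : ℝ} {a : Action}

theorem Covers.inBounds (h : Covers α β Smax s₁ s₂ S₁ S₂ B) (hs : InBounds Smax s₁ s₂) :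
    InBounds Smax S₁ S₂ :=
  ⟨h.1, h.2.1.trans hs.2.1, hs.2.2.1.trans h.2.2.1, h.2.2.2.1⟩

theorem exists_slotFeasible_covers_of_uncapped {P₁ P₂ : ℝ} (hα : 0 < α) (hβ : 0 ≤ β)
    (ha : SlotFeasible α β e₁ e₂ a S₁ S₂ P₁ P₂) (hS₂ : S₂ ≤ Smax) (hs₂' : s₂' ≤ Smax)
    (hP₁ : 0 ≤ P₁) (hP₁s : P₁ ≤ s₁') (hP₂ : s₂' ≤ P₂) (hB : 0 ≤ B)
    (hcov : α * (s₁' - P₁) ≤ α * β * (P₂ - s₂') + B) :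
    ∃ (a' : Action) (S₁' S₂' : ℝ), a'.w₁ + a'.w₂ = a.w₁ + a.w₂ ∧
      SlotFeasible α β e₁ e₂ a' S₁ S₂ S₁' S₂' ∧ Covers α β Smax s₁' s₂' S₁' S₂' B := by
  obtain ⟨hw₁, hw₂, hc₁, hc₂, hd₁, hd₂, hx₁₂, hx₂₁, rfl, rfl, hds₁, hds₂, hbal₁, hbal₂⟩ := ha
  -- BS 2 sheds its overflow `X` by charging `q` less and sending `q` to BS 1,
  -- which charges `z` more.
  obtain ⟨X, hX⟩ : ∃ X, X = max 0 (S₂ + α * a.c₂ - a.d₂ - Smax) := ⟨_, rfl⟩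
  obtain ⟨q, hαq⟩ : ∃ q, α * q = X := ⟨X / α, mul_div_cancel₀ X hα.ne'⟩
  obtain ⟨z, hz⟩ : ∃ z, z = min (β * q) ((s₁' - (S₁ + α * a.c₁ - a.d₁)) / α) := ⟨_, rfl⟩
  have hX₀ : 0 ≤ X := hX ▸ le_max_left _ _
  have hXc₂ : X ≤ α * a.c₂ := hX ▸ max_le (by positivity) (by linarith)
  have hXP₂ : X ≤ S₂ + α * a.c₂ - a.d₂ - s₂' := hX ▸ max_le (by linarith) (by linarith)
  have hq₀ : 0 ≤ q := nonneg_of_mul_nonneg_right (hαq ▸ hX₀) hα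
  have hqc₂ : q ≤ a.c₂ := le_of_mul_le_mul_left (by linarith) hα
  have hz₀ : 0 ≤ z := hz ▸ le_min (by positivity) (div_nonneg (by linarith) hα.le)
  have hzq : z ≤ β * q := hz ▸ min_le_left _ _
  have hαz : α * z ≤ s₁' - (S₁ + α * a.c₁ - a.d₁) := (le_div_iff₀' hα).1 (hz ▸ min_le_right _ _)
  refine ⟨⟨a.w₁, a.w₂, a.c₁ + z, a.c₂ - q, a.d₁, a.d₂, a.x₁₂, a.x₂₁ + q⟩,
    S₁ + α * (a.c₁ + z) - a.d₁, S₂ + α * (a.c₂ - q) - a.d₂, rfl, ?_, ?_⟩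
  · refine ⟨hw₁, hw₂, ?_, ?_, hd₁, hd₂, hx₁₂, ?_, rfl, rfl, hds₁, hds₂, ?_, ?_⟩ <;> dsimp only <;>
      linarith
  have hαz₀ : 0 ≤ α * z := mul_nonneg hα.le hz₀
  refine ⟨by linarith, by linarith, by linarith,
    by linarith [hX ▸ le_max_right 0 (S₂ + α * a.c₂ - a.d₂ - Smax)], hB, ?_⟩
  rcases min_choice (β * q) ((s₁' - (S₁ + α * a.c₁ - a.d₁)) / α) with hz' | hz'
  · rw [← hz] at hz'
    rw [hz']
    linear_combination hcov
  · rw [← hz] at hz'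
    have hS₁' : s₁' - (S₁ + α * (a.c₁ + z) - a.d₁) = 0 := by
      rw [hz']; field_simp; ring
    have hS₂' : 0 ≤ S₂ + α * (a.c₂ - q) - a.d₂ - s₂' := by linarith
    rw [hS₁', mul_zero]
    exact add_nonneg (mul_nonneg (mul_nonneg hα.le hβ) hS₂') hB

theorem exists_slotFeasible_covers (hα : 0 < α) (hβ : 0 < β)
    (ha : SlotFeasible α β e₁ e₂ a s₁ s₂ s₁' s₂') (hs₂' : s₂' ≤ Smax)
    (hcov : Covers α β Smax s₁ s₂ S₁ S₂ B) :
    ∃ (a' : Action) (S₁' S₂' B' : ℝ), SlotFeasible α β e₁ e₂ a' S₁ S₂ S₁' S₂' ∧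
      Covers α β Smax s₁' s₂' S₁' S₂' B' ∧ a'.w₁ + a'.w₂ + B' ≤ a.w₁ + a.w₂ + B := by
  obtain ⟨hw₁, hw₂, hc₁, hc₂, hd₁, hd₂, hx₁₂, hx₂₁, rfl, rfl, hds₁, hds₂, hbal₁, hbal₂⟩ := ha
  obtain ⟨hS₁, hS₁s, hs₂S, hS₂, hB, hcov⟩ := hcov
  -- BS 1 discharges `r` less than before; BS 2 discharges `u` more and sends it over, and the
  -- budget pays for the remaining `α r - α β u`.
  obtain ⟨r, hr⟩ : ∃ r, r = max 0 (a.d₁ - S₁) := ⟨_, rfl⟩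
  obtain ⟨u, hu⟩ : ∃ u, u = min (S₂ - s₂) (r / β) := ⟨_, rfl⟩
  have hr₀ : 0 ≤ r := hr ▸ le_max_left _ _
  have hrS : a.d₁ - S₁ ≤ r := hr ▸ le_max_right _ _
  have hrd : r ≤ a.d₁ := hr ▸ max_le hd₁ (by linarith)
  have hrs : r ≤ s₁ - S₁ := hr ▸ max_le (by linarith) (by linarith)
  have hu₀ : 0 ≤ u := hu ▸ le_min (by linarith) (div_nonneg hr₀ hβ.le)
  have huS : u ≤ S₂ - s₂ := hu ▸ min_le_left _ _
  have hβu : β * u ≤ r := (le_div_iff₀' hβ).1 (hu ▸ min_le_right _ _)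
  have hαu : 0 ≤ α * u := mul_nonneg hα.le hu₀
  have hαβu : α * (β * u) ≤ α * r := mul_le_mul_of_nonneg_left hβu hα.le
  have hmB : α * r - α * β * u ≤ B := by
    rcases min_choice (S₂ - s₂) (r / β) with hu' | hu'
    · rw [← hu] at hu'
      subst hu'
      linarith [mul_le_mul_of_nonneg_left hrs hα.le]
    · rw [← hu] at hu'
      have : α * (β * u) = α * r := by rw [hu']; field_simp
      linarith
  have hslot : SlotFeasible α β e₁ e₂
      ⟨a.w₁ + (α * r - α * β * u), a.w₂, a.c₁, a.c₂, a.d₁ - r, a.d₂ + u, a.x₁₂, a.x₂₁ + α * u⟩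
      S₁ S₂ (S₁ + α * a.c₁ - (a.d₁ - r)) (S₂ + α * a.c₂ - (a.d₂ + u)) := by
    refine ⟨?_, hw₂, hc₁, hc₂, ?_, ?_, hx₁₂, ?_, rfl, rfl, ?_, ?_, ?_, ?_⟩ <;> dsimp only <;>
      linarith
  obtain ⟨a', S₁', S₂', hw, ha', hcov'⟩ := exists_slotFeasible_covers_of_uncapped
    (s₁' := s₁ + α * a.c₁ - a.d₁) (B := B - (α * r - α * β * u)) hα hβ.le hslot hS₂ hs₂'
    (by linarith [mul_nonneg hα.le hc₁]) (by linarith) (by linarith) (by linarith) (by linarith)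
  exact ⟨a', S₁', S₂', _, ha', hcov', by rw [hw]; dsimp only; linarith⟩

theorem mul_self_mul_le_add_sub {α β f g D : ℝ} (hα : 0 ≤ α) (hαβ : α ≤ β) (hβ : β ≤ 1)
    (hg₀ : 0 ≤ g) (hgD : g ≤ D) (hαf : α * f ≤ β * D) :
    α * α * g ≤ α * β * f + (β * D - α * f) := by
  have h₁ : (1 - β) * (α * f) ≤ (1 - β) * (β * D) := mul_le_mul_of_nonneg_left hαf (by linarith)
  have h₂ : α * α * g ≤ β * β * D :=
    mul_le_mul (mul_self_le_mul_self hα hαβ) hgD hg₀ (mul_nonneg (hα.trans hαβ) (hα.trans hαβ))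
  linarith

theorem exists_slotFeasible_covers_transfer {Δ : ℝ} (hα : 0 < α) (hαβ : α ≤ β) (hβ : β ≤ 1)
    (hΔ₁ : Δ ≤ e₁) (hΔ₂ : β * Δ ≤ -e₂)
    (ha : SlotFeasible α β e₁ e₂ a s₁ s₂ s₁' s₂') (hs₂ : s₂ ≤ Smax) (hs₂' : s₂' ≤ Smax) :
    ∃ (a' : Action) (S₁' S₂' B : ℝ), SlotFeasible α β (e₁ - Δ) (e₂ + β * Δ) a' s₁ s₂ S₁' S₂' ∧
      Covers α β Smax s₁' s₂' S₁' S₂' B ∧ a'.w₁ + a'.w₂ + B ≤ a.w₁ + a.w₂ := by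
  obtain ⟨hw₁, hw₂, hc₁, hc₂, hd₁, hd₂, hx₁₂, hx₂₁, rfl, rfl, hds₁, hds₂, hbal₁, hbal₂⟩ := ha
  have hβ₀ : 0 < β := hα.trans_le hαβ
  -- BS 1 withholds `y` of its transfer and `g` of its charge; BS 2 withholds `f` of its
  -- discharge and saves the rest of the `β (Δ - y)` it gains on the grid.
  obtain ⟨y, hy⟩ : ∃ y, y = min Δ a.x₁₂ := ⟨_, rfl⟩
  obtain ⟨f, hf⟩ : ∃ f, f = min a.d₂ (β * (Δ - y) / α) := ⟨_, rfl⟩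
  obtain ⟨g, hg⟩ : ∃ g, g = min a.c₁ (Δ - y) := ⟨_, rfl⟩
  have hyΔ : y ≤ Δ := hy ▸ min_le_left _ _
  have hyx : y ≤ a.x₁₂ := hy ▸ min_le_right _ _
  have hf₀ : 0 ≤ f := hf ▸ le_min hd₂ (div_nonneg (mul_nonneg hβ₀.le (by linarith)) hα.le)
  have hfd : f ≤ a.d₂ := hf ▸ min_le_left _ _
  have hαf : α * f = min (α * a.d₂) (β * (Δ - y)) := by
    rw [hf, mul_min_of_nonneg _ _ hα.le, mul_div_cancel₀ _ hα.ne']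
  have hαfΔ : α * f ≤ β * (Δ - y) := hαf ▸ min_le_right _ _
  have hg₀ : 0 ≤ g := hg ▸ le_min hc₁ (by linarith)
  have hgc : g ≤ a.c₁ := hg ▸ min_le_left _ _
  have hgΔ : g ≤ Δ - y := hg ▸ min_le_right _ _
  have hβy : β * Δ - (a.w₂ + α * a.d₂) ≤ β * y := by
    rw [hy, mul_min_of_nonneg _ _ hβ₀.le]
    exact le_min (by linarith [mul_nonneg hα.le hd₂]) (by linarith)
  have hsave : β * (Δ - y) - α * f ≤ a.w₂ := by
    have : β * (Δ - y) - a.w₂ ≤ α * f := hαf ▸ le_min (by linarith) (by linarith)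
    linarith
  have hy' : Δ - (a.c₁ + (e₁ + a.w₁ - a.c₁ + α * a.d₁ - a.x₁₂ + β * a.x₂₁)) ≤ y :=
    hy ▸ le_min (by linarith) (by linarith [mul_nonneg hα.le hd₁, mul_nonneg hβ₀.le hx₂₁])
  have hg' : Δ - y - (e₁ + a.w₁ - a.c₁ + α * a.d₁ - a.x₁₂ + β * a.x₂₁) ≤ g :=
    hg ▸ le_min (by linarith) (by linarith)
  have hslot : SlotFeasible α β (e₁ - Δ) (e₂ + β * Δ)
      ⟨a.w₁, a.w₂ - (β * (Δ - y) - α * f), a.c₁ - g, a.c₂, a.d₁, a.d₂ - f, a.x₁₂ - y, a.x₂₁⟩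
      s₁ s₂ (s₁ + α * (a.c₁ - g) - a.d₁) (s₂ + α * a.c₂ - (a.d₂ - f)) := by
    refine ⟨hw₁, ?_, ?_, hc₂, hd₁, ?_, ?_, hx₂₁, rfl, rfl, hds₁, ?_, ?_, ?_⟩ <;> dsimp only <;>
      linarith
  have hcov : α * (s₁ + α * a.c₁ - a.d₁ - (s₁ + α * (a.c₁ - g) - a.d₁)) ≤
      α * β * (s₂ + α * a.c₂ - (a.d₂ - f) - (s₂ + α * a.c₂ - a.d₂)) + (β * (Δ - y) - α * f) := by
    linarith [mul_self_mul_le_add_sub hα.le hαβ hβ hg₀ hgΔ hαfΔ]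
  obtain ⟨a', S₁', S₂', hw, ha', hcov'⟩ := exists_slotFeasible_covers_of_uncapped
    (s₁' := s₁ + α * a.c₁ - a.d₁) hα hβ₀.le hslot hs₂ hs₂'
    (by linarith [mul_nonneg hα.le (sub_nonneg.2 hgc)]) (by linarith [mul_nonneg hα.le hg₀])
    (by linarith) (by linarith) hcov
  exact ⟨a', S₁', S₂', _, ha', hcov', by rw [hw]; dsimp only; linarith⟩

end slot

theorem exists_mem_costSet_le_add_of_covers {α β Smax σ₁ σ₂ S₁ S₂ B r : ℝ} {k N : ℕ}
    {E₁ E₂ : ℕ → ℝ} (hα : 0 < α) (hβ : 0 < β) (hk : k ≤ N + 1)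
    (hcov : Covers α β Smax σ₁ σ₂ S₁ S₂ B) (hr : r ∈ costSet α β Smax k N E₁ E₂ σ₁ σ₂) :
    ∃ r' ∈ costSet α β Smax k N E₁ E₂ S₁ S₂, r' ≤ r + B := by
  induction hk using Nat.decreasingInduction generalizing σ₁ σ₂ S₁ S₂ B r with
  | self =>
    obtain rfl := eq_zero_of_mem_costSet_succ hr
    exact ⟨0, zero_mem_costSet_succ (hcov.inBounds (inBounds_of_mem_costSet le_rfl hr)),
      by linarith [hcov.2.2.2.2.1]⟩
  | of_succ k hk ih =>
    obtain ⟨a, s₁', s₂', r₀, ha, hr₀, rfl⟩ := exists_of_mem_costSet (Nat.le_of_lt_succ hk) hr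
    obtain ⟨a', S₁', S₂', B', ha', hcov', hcost⟩ := exists_slotFeasible_covers hα hβ ha
      (inBounds_of_mem_costSet hk hr₀).2.2.2 hcov
    obtain ⟨r₁, hr₁, hle⟩ := ih hcov' hr₀
    exact ⟨_, add_mem_costSet (Nat.le_of_lt_succ hk)
      (hcov.inBounds (inBounds_of_mem_costSet hk.le hr)) ha' hr₁, by linarith⟩

end EnergyCooperation

open EnergyCooperation in
theorem energy_transfer_optimal_general
    (α β Smax : ℝ) (hα : 0 < α) (hαβ : α < β) (hβ : β ≤ 1)
    (k N : ℕ) (hkN : k ≤ N) (E₁ E₂ : ℕ → ℝ)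
    (Δ : ℝ) (hΔ : Δ = min (-(E₂ k) / β) (E₁ k))
    (E₁' E₂' : ℕ → ℝ)
    (hE₁' : E₁' = fun t => if t = k then E₁ k - Δ else E₁ t)
    (hE₂' : E₂' = fun t => if t = k then E₂ k + β * Δ else E₂ t)
    (σ₁ σ₂ : ℝ) (hσ₁ : 0 ≤ σ₁ ∧ σ₁ ≤ Smax) (hσ₂ : 0 ≤ σ₂ ∧ σ₂ ≤ Smax) :
    Jstar α β Smax k N E₁' E₂' σ₁ σ₂ ≤ Jstar α β Smax k N E₁ E₂ σ₁ σ₂ := by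
  have hβ₀ : 0 < β := hα.trans hαβ
  have hΔ₁ : Δ ≤ E₁ k := hΔ ▸ min_le_right _ _
  have hΔ₂ : β * Δ ≤ -E₂ k := (le_div_iff₀' hβ₀).1 (hΔ ▸ min_le_left _ _)
  have htail : ∀ S₁ S₂, costSet α β Smax (k + 1) N E₁ E₂ S₁ S₂ =
      costSet α β Smax (k + 1) N E₁' E₂' S₁ S₂ := fun S₁ S₂ => by
    refine costSet_congr (fun t ht => ?_) (fun t ht => ?_) <;>
      simp only [Finset.coe_Icc, Set.mem_Icc] at ht <;> simp [hE₁', hE₂', show t ≠ k by omega]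
  have hσ : InBounds Smax σ₁ σ₂ := ⟨hσ₁.1, hσ₁.2, hσ₂.1, hσ₂.2⟩
  refine le_csInf (costSet_nonempty hσ) fun r hr => ?_
  obtain ⟨a, s₁', s₂', r₀, ha, hr₀, rfl⟩ := exists_of_mem_costSet hkN hr
  obtain ⟨a', S₁', S₂', B, ha', hcov, hcost⟩ := exists_slotFeasible_covers_transfer hα hαβ.le hβ
    hΔ₁ hΔ₂ ha hσ₂.2 (inBounds_of_mem_costSet (by omega) hr₀).2.2.2
  obtain ⟨r₁, hr₁, hle⟩ := exists_mem_costSet_le_add_of_covers hα hβ₀ (by omega) hcov hr₀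
  have hmem : a'.w₁ + a'.w₂ + r₁ ∈ costSet α β Smax k N E₁' E₂' σ₁ σ₂ := by
    refine add_mem_costSet hkN hσ ?_ (htail _ _ ▸ hr₁)
    simpa [hE₁', hE₂'] using ha'
  exact (csInf_le costSet_bddBelow hmem).trans (by linarith)

/-- Proposition 4: energy transfer is always optimal when `β > α`. -/
theorem energy_transfer_optimal
    (α β Smax : ℝ) (hα : 0 < α) (hαβ : α < β) (hβ : β ≤ 1) (hS : 0 < Smax)
    (k N : ℕ) (hkN : k ≤ N) (E₁ E₂ : ℕ → ℝ)
    (hEk : E₁ k > 0 ∧ 0 > E₂ k)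
    (Δ : ℝ) (hΔ : Δ = min (-(E₂ k) / β) (E₁ k))
    (E₁' E₂' : ℕ → ℝ)
    (hE₁' : E₁' = fun t => if t = k then E₁ k - Δ else E₁ t)
    (hE₂' : E₂' = fun t => if t = k then E₂ k + β * Δ else E₂ t)
    (σ₁ σ₂ : ℝ) (hσ₁ : 0 ≤ σ₁ ∧ σ₁ ≤ Smax) (hσ₂ : 0 ≤ σ₂ ∧ σ₂ ≤ Smax) :
    Jstar α β Smax k N E₁' E₂' σ₁ σ₂ ≤ Jstar α β Smax k N E₁ E₂ σ₁ σ₂ :=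
  energy_transfer_optimal_general α β Smax hα hαβ hβ k N hkN E₁ E₂ Δ hΔ E₁' E₂' hE₁' hE₂' σ₁ σ₂ hσ₁
    hσ₂
end
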